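/- arXiv:2212.01668 — 3 statements merged into one kernel-verified Lean document; each statement's English description precedes it below -/
import Mathlib

section
/- Let K be an algebraically closed field and k ≥ 3. Let T be a k-tensor of format (n_1,…,n_k) over K with pR(T) ≥ 2, and let m_1,…,m_k ≥ 2 be integers. Then there exist linear maps π_i : K^{n_i} → K^{m_i} such that pR((π_1 ⊗ ⋯ ⊗ π_k)T) ≥ 2. -/
namespace GapSubrank

variable {K : Type*} [Field K]

/-- Apply a tuple of linear maps (given as matrices, one per tensor leg) to a tensor. -/
noncomputable def applyMaps {a : Type*} [Fintype a] [DecidableEq a] {ι κ : a → Type*}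
    [∀ i, Fintype (ι i)]
    (A : ∀ i, κ i → ι i → K) (T : (∀ i, ι i) → K) : (∀ i, κ i) → K :=
  fun y => ∑ x : ∀ i, ι i, (∏ i, A i (y i) (x i)) * T x

/-- `T` restricts to `S`. -/
def Restricts {a : Type*} [Fintype a] [DecidableEq a] {ι κ : a → Type*}
    [∀ i, Fintype (ι i)]
    (T : (∀ i, ι i) → K) (S : (∀ i, κ i) → K) : Prop :=
  ∃ A : ∀ i, κ i → ι i → K, applyMaps A T = S

/-- The unit (identity/diagonal) tensor of order `a` and rank `r`. -/
def unitTensor (K : Type*) [Field K] (a : Type*) [Fintype a] (r : ℕ) :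
    (a → Fin r) → K :=
  fun x => if ∀ i j : a, x i = x j then 1 else 0

/-- The subrank of a tensor: the largest `r` such that `T` restricts to the unit tensor. -/
noncomputable def subrank {a : Type*} [Fintype a] [DecidableEq a] {ι : a → Type*}
    [∀ i, Fintype (ι i)] (T : (∀ i, ι i) → K) : ℕ :=
  sSup {r : ℕ | Restricts T (unitTensor K a r)}

/-- The `N`-th Kronecker power of a tensor. -/
def kronPow {a : Type*} {ι : a → Type*} (N : ℕ) (T : (∀ i, ι i) → K) :
    (∀ i, Fin N → ι i) → K :=
  fun x => ∏ j : Fin N, T fun i => x i j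

/-- The flattening of a tensor with respect to a subset `I` of the legs. -/
def flatten {a : Type*} [DecidableEq a] {ι : a → Type*}
    (T : (∀ i, ι i) → K) (I : Finset a) :
    Matrix (∀ i : {i // i ∈ I}, ι i) (∀ i : {i // i ∉ I}, ι i) K :=
  Matrix.of fun p q => T fun i => if h : i ∈ I then p ⟨i, h⟩ else q ⟨i, h⟩

/-- A tensor has partition rank one if some flattening w.r.t. a nonempty proper subset
of the legs has matrix rank one. -/
def HasPartitionRankOne {a : Type*} [Fintype a] [DecidableEq a] {ι : a → Type*}
    [∀ i, Fintype (ι i)] (T : (∀ i, ι i) → K) : Prop :=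
  ∃ I : Finset a, I ≠ ∅ ∧ I ≠ Finset.univ ∧ (flatten T I).rank = 1

/-- The partition rank: least `r` such that `T` is a sum of `r` partition-rank-one tensors. -/
noncomputable def prank {a : Type*} [Fintype a] [DecidableEq a] {ι : a → Type*}
    [∀ i, Fintype (ι i)] (T : (∀ i, ι i) → K) : ℕ :=
  sInf {r : ℕ | ∃ f : Fin r → ((∀ i, ι i) → K),
    (∀ j, HasPartitionRankOne (f j)) ∧ T = ∑ j, f j}

/-- A tensor has slice rank one if some one-leg flattening has matrix rank one. -/
def HasSliceRankOne {a : Type*} [Fintype a] [DecidableEq a] {ι : a → Type*}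
    [∀ i, Fintype (ι i)] (T : (∀ i, ι i) → K) : Prop :=
  ∃ p : a, (flatten T {p}).rank = 1

/-- The slice rank: least `r` such that `T` is a sum of `r` slice-rank-one tensors. -/
noncomputable def srank {a : Type*} [Fintype a] [DecidableEq a] {ι : a → Type*}
    [∀ i, Fintype (ι i)] (T : (∀ i, ι i) → K) : ℕ :=
  sInf {r : ℕ | ∃ f : Fin r → ((∀ i, ι i) → K),
    (∀ j, HasSliceRankOne (f j)) ∧ T = ∑ j, f j}

/-- The constant `c_k = k / (k-1)^((k-1)/k)`. -/
noncomputable def ck (k : ℕ) : ℝ :=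
  (k : ℝ) / ((k : ℝ) - 1) ^ (((k : ℝ) - 1) / (k : ℝ))

/-- A point `v` is in the Zariski closure of `X`: every polynomial function in the
coordinates vanishing on `X` vanishes at `v`. -/
def InZariskiClosure {σ : Type*} (X : Set (σ → K)) (v : σ → K) : Prop :=
  ∀ p : MvPolynomial σ K, (∀ x ∈ X, MvPolynomial.eval x p = 0) → MvPolynomial.eval v p = 0

/-- The W-tensor: coefficient `1` exactly on tuples with one coordinate equal to the second
basis index and all others equal to the first basis index. -/
def wTensor (K : Type*) [Field K] {a : Type*} [Fintype a] [DecidableEq a] (n : a → ℕ) :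
    (∀ i, Fin (n i)) → K :=
  fun x => if ∃ j, (x j : ℕ) = 1 ∧ ∀ i, i ≠ j → (x i : ℕ) = 0 then 1 else 0

/-- The orbit of a tensor under the product of general linear groups acting on the legs. -/
noncomputable def tensorOrbit {a : Type*} [Fintype a] [DecidableEq a] {ι : a → Type*}
    [∀ i, Fintype (ι i)] [∀ i, DecidableEq (ι i)]
    (T : (∀ i, ι i) → K) : Set ((∀ i, ι i) → K) :=
  {S | ∃ g : ∀ i, Matrix (ι i) (ι i) K, (∀ i, IsUnit (g i)) ∧
    S = applyMaps (fun i y x => g i y x) T}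

end GapSubrank

/-! A tensor has partition rank at least two iff every flattening `T_I` (`I` nonempty and proper)
has rank at least two, i.e. has a nonvanishing `2 × 2` minor. A `2 × 2` minor of a flattening of
`(π_1 ⊗ ⋯ ⊗ π_k) T` is a polynomial in the entries of the `π_i`, and it is not the zero polynomial:
for `π_i` selecting the rows and columns of a nonvanishing minor of `T_I` it evaluates to that
minor. Over the infinite field `K` the product of these finitely many nonzero polynomials does not
vanish at some point, and the `π_i` read off from that point keep every flattening of rank at
least two. -/

namespace Matrix

variable {m n K : Type*} [Fintype n] [Field K] {M : Matrix m n K}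

theorem one_le_rank_of_apply_ne_zero {i : m} {j : n} (h : M i j ≠ 0) : 1 ≤ M.rank := by
  have := rank_submatrix_le M (fun _ : Unit => i) (fun _ : Unit => j)
  rwa [rank_of_det_ne_zero (by simpa [det_unique] using h)] at this

theorem two_le_rank_iff_exists_mul_sub_mul_ne_zero [Fintype m] :
    2 ≤ M.rank ↔ ∃ i₁ i₂ j₁ j₂, M i₁ j₁ * M i₂ j₂ - M i₁ j₂ * M i₂ j₁ ≠ 0 := by
  constructor
  · intro h
    by_contra! hM
    obtain ⟨i₀, j₀, h₀⟩ : ∃ i j, M i j ≠ 0 := by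
      by_contra! h0
      simp [show M = 0 from ext h0] at h
    have hM : M = vecMulVec (fun i => M i j₀ / M i₀ j₀) (M i₀) := by
      ext i j
      rw [vecMulVec_apply, div_mul_eq_mul_div, eq_div_iff h₀, ← sub_eq_zero, ← hM i i₀ j j₀]
    have := rank_vecMulVec_le (fun i => M i j₀ / M i₀ j₀) (M i₀)
    rw [← hM] at this
    omega
  · rintro ⟨i₁, i₂, j₁, j₂, h⟩
    have := rank_submatrix_le M ![i₁, i₂] ![j₁, j₂]
    rwa [rank_of_det_ne_zero (by rw [det_fin_two]; simpa using h)] at this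

end Matrix

namespace GapSubrank

open Finset Matrix MvPolynomial

variable {K : Type*} {a : Type*} [DecidableEq a] {ι κ : a → Type*}

theorem flatten_apply (T : (∀ i, ι i) → K) (I : Finset a) (p : ∀ i : {i // i ∈ I}, ι i)
    (q : ∀ i : {i // i ∉ I}, ι i) :
    flatten T I p q = T ((Equiv.piEquivPiSubtypeProd (· ∈ I) ι).symm (p, q)) :=
  rfl

theorem flatten_apply_self (T : (∀ i, ι i) → K) (I : Finset a) (x : ∀ i, ι i) :
    flatten T I (fun i => x i) (fun i => x i) = T x :=
  congrArg T ((Equiv.piEquivPiSubtypeProd (· ∈ I) ι).symm_apply_apply x)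

theorem flatten_comp (T : (∀ i, ι i) → K) (f : ∀ i, κ i → ι i) (I : Finset a)
    (p : ∀ i : {i // i ∈ I}, κ i) (q : ∀ i : {i // i ∉ I}, κ i) :
    flatten (fun y => T fun i => f i (y i)) I p q =
      flatten T I (fun i => f i (p i)) (fun i => f i (q i)) := by
  simp only [flatten_apply]
  congr 1
  ext i
  simp only [Equiv.piEquivPiSubtypeProd_symm_apply]
  split_ifs <;> rfl

variable [Field K] [Fintype a]

theorem flatten_single [∀ i, DecidableEq (ι i)] (x : ∀ i, ι i) (c : K) (I : Finset a) :
    flatten (Pi.single x c) I =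
      vecMulVec (Pi.single (Equiv.piEquivPiSubtypeProd (· ∈ I) ι x).1 c)
        (Pi.single (Equiv.piEquivPiSubtypeProd (· ∈ I) ι x).2 1) := by
  ext r s
  simp only [flatten_apply, Pi.single_apply, Equiv.symm_apply_eq]
  simp [vecMulVec_apply, Pi.single_apply, Prod.ext_iff, ite_and]
  split_ifs <;> rfl

variable [∀ i, Fintype (ι i)]

theorem hasPartitionRankOne_single [Nontrivial a] [∀ i, DecidableEq (ι i)] (x : ∀ i, ι i)
    {c : K} (hc : c ≠ 0) : HasPartitionRankOne (Pi.single x c) := by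
  obtain ⟨p, -⟩ := exists_pair_ne a
  refine ⟨{p}, by simp, singleton_ne_univ p, le_antisymm ?_ ?_⟩
  · exact flatten_single x c {p} ▸ rank_vecMulVec_le _ _
  · refine one_le_rank_of_apply_ne_zero (i := fun i => x i) (j := fun i => x i) ?_
    rwa [flatten_apply_self, Pi.single_eq_same]

theorem exists_eq_sum_hasPartitionRankOne [Nontrivial a] (T : (∀ i, ι i) → K) :
    ∃ r, ∃ f : Fin r → (∀ i, ι i) → K, (∀ j, HasPartitionRankOne (f j)) ∧ T = ∑ j, f j := by
  classical
  let e := Fintype.equivFin {x // T x ≠ 0}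
  refine ⟨_, fun j => Pi.single (e.symm j).1 (T (e.symm j)),
    fun j => hasPartitionRankOne_single _ (e.symm j).2, ?_⟩
  calc T = ∑ x : {x // T x ≠ 0}, Pi.single x.1 (T x) := by
        ext y
        rw [Finset.sum_apply, ← Finset.sum_subtype {x | T x ≠ 0} (fun x => by simp)
          (fun x => Pi.single x (T x) y)]
        simp [Pi.single_apply]
    _ = _ := (e.symm.sum_comp _).symm

theorem prank_le_of_eq_sum {T : (∀ i, ι i) → K} {r : ℕ} (f : Fin r → (∀ i, ι i) → K)
    (hf : ∀ j, HasPartitionRankOne (f j)) (hT : T = ∑ j, f j) : prank T ≤ r :=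
  Nat.sInf_le ⟨f, hf, hT⟩

theorem two_le_prank_iff [Nontrivial a] {T : (∀ i, ι i) → K} :
    2 ≤ prank T ↔ T ≠ 0 ∧ ¬HasPartitionRankOne T := by
  constructor
  · intro h
    refine ⟨fun h0 => ?_, fun h1 => ?_⟩
    · have := prank_le_of_eq_sum (T := T) Fin.elim0 (fun j => j.elim0) (by simp [h0])
      omega
    · have := prank_le_of_eq_sum (T := T) (fun _ : Fin 1 => T) (fun _ => h1) (by simp)
      omega
  · rintro ⟨h0, h1⟩
    refine le_csInf (exists_eq_sum_hasPartitionRankOne T) ?_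
    rintro (_ | _ | r) ⟨f, hf, rfl⟩
    · exact absurd (Fin.sum_univ_zero f) h0
    · exact absurd (Fin.sum_univ_one f ▸ hf 0) h1
    · omega

theorem two_le_prank_iff_forall_two_le_rank_flatten [Nontrivial a] {T : (∀ i, ι i) → K} :
    2 ≤ prank T ↔ ∀ I : Finset a, I ≠ ∅ → I ≠ univ → 2 ≤ (flatten T I).rank := by
  rw [two_le_prank_iff]
  constructor
  · rintro ⟨h0, h1⟩ I hI hI'
    obtain ⟨x, hx⟩ := Function.ne_iff.mp h0
    have : 1 ≤ (flatten T I).rank := one_le_rank_of_apply_ne_zero (i := fun i => x i)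
      (j := fun i => x i) (by rwa [flatten_apply_self])
    have : (flatten T I).rank ≠ 1 := fun h => h1 ⟨I, hI, hI', h⟩
    omega
  · intro h
    refine ⟨fun h0 => ?_, fun ⟨I, hI, hI', h1⟩ => by have := h I hI hI'; omega⟩
    obtain ⟨p, -⟩ := exists_pair_ne a
    have := h {p} (by simp) (singleton_ne_univ p)
    simp [h0, show flatten (0 : (∀ i, ι i) → K) {p} = 0 from rfl] at this

theorem applyMaps_ite_eq [∀ i, DecidableEq (ι i)] (f : ∀ i, κ i → ι i) (T : (∀ i, ι i) → K) :
    applyMaps (fun i y x => if x = f i y then 1 else 0) T = fun y => T fun i => f i (y i) := by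
  ext y
  simp [applyMaps, Fintype.prod_boole, ← funext_iff]

noncomputable def genericApplyMaps (T : (∀ i, ι i) → K) (y : ∀ i, κ i) :
    MvPolynomial (Σ i, κ i × ι i) K :=
  ∑ x : ∀ i, ι i, (∏ i, X ⟨i, (y i, x i)⟩) * C (T x)

theorem eval_genericApplyMaps (v : (Σ i, κ i × ι i) → K) (T : (∀ i, ι i) → K)
    (y : ∀ i, κ i) :
    eval v (genericApplyMaps T y) = applyMaps (fun i y x => v ⟨i, (y, x)⟩) T y := by
  simp [genericApplyMaps, applyMaps]

variable [∀ i, Fintype (κ i)] [∀ i, Nontrivial (κ i)]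

theorem exists_ne_zero_forall_eval_ne_zero_two_le_rank_flatten_applyMaps
    {T : (∀ i, ι i) → K} {I : Finset a} (hT : 2 ≤ (flatten T I).rank) :
    ∃ P : MvPolynomial (Σ i, κ i × ι i) K, P ≠ 0 ∧
      ∀ v, eval v P ≠ 0 → 2 ≤ (flatten (applyMaps (fun i y x => v ⟨i, (y, x)⟩) T) I).rank := by
  classical
  obtain ⟨p₁, p₂, q₁, q₂, hpq⟩ := two_le_rank_iff_exists_mul_sub_mul_ne_zero.mp hT
  choose y₁ y₂ hy using fun i => exists_pair_ne (κ i)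
  set G := flatten (genericApplyMaps (κ := κ) T) I
  let P₁ : ∀ i : {i // i ∈ I}, κ i := fun i => y₁ i
  let P₂ : ∀ i : {i // i ∈ I}, κ i := fun i => y₂ i
  let Q₁ : ∀ i : {i // i ∉ I}, κ i := fun i => y₁ i
  let Q₂ : ∀ i : {i // i ∉ I}, κ i := fun i => y₂ i
  have hG (v) (p q) : eval v (G p q) = flatten (applyMaps (fun i y x => v ⟨i, (y, x)⟩) T) I p q :=
    eval_genericApplyMaps v T _
  refine ⟨G P₁ Q₁ * G P₂ Q₂ - G P₁ Q₂ * G P₂ Q₁, fun hP => hpq ?_, fun v hv => ?_⟩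
  · -- at the maps `f` sending `y₁, y₂` to the rows `p₁, p₂` and the columns `q₁, q₂`
    let f : ∀ i, κ i → ι i := fun i y => if h : i ∈ I
      then if y = y₁ i then p₁ ⟨i, h⟩ else p₂ ⟨i, h⟩
      else if y = y₁ i then q₁ ⟨i, h⟩ else q₂ ⟨i, h⟩
    have hp₁ : (fun i : {i // i ∈ I} => f i (P₁ i)) = p₁ := funext fun i => by simp [f, P₁, i.2]
    have hp₂ : (fun i : {i // i ∈ I} => f i (P₂ i)) = p₂ :=
      funext fun i => by simp [f, P₂, i.2, (hy i).symm]
    have hq₁ : (fun i : {i // i ∉ I} => f i (Q₁ i)) = q₁ := funext fun i => by simp [f, Q₁, i.2]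
    have hq₂ : (fun i : {i // i ∉ I} => f i (Q₂ i)) = q₂ :=
      funext fun i => by simp [f, Q₂, i.2, (hy i).symm]
    have := congrArg (eval fun s => if s.2.2 = f s.1 s.2.1 then 1 else 0) hP
    simp only [map_sub, map_mul, map_zero, hG, applyMaps_ite_eq, flatten_comp] at this
    rwa [hp₁, hp₂, hq₁, hq₂] at this
  · refine two_le_rank_iff_exists_mul_sub_mul_ne_zero.mpr ⟨P₁, P₂, Q₁, Q₂, ?_⟩
    simpa only [map_sub, map_mul, hG] using hv

theorem exists_applyMaps_forall_two_le_rank_flatten [Infinite K] (𝓘 : Finset (Finset a))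
    {T : (∀ i, ι i) → K} (hT : ∀ I ∈ 𝓘, 2 ≤ (flatten T I).rank) :
    ∃ A : ∀ i, κ i → ι i → K, ∀ I ∈ 𝓘, 2 ≤ (flatten (applyMaps A T) I).rank := by
  choose! P hP₀ hP using fun I hI =>
    exists_ne_zero_forall_eval_ne_zero_two_le_rank_flatten_applyMaps (κ := κ) (hT I hI)
  obtain ⟨v, hv⟩ : ∃ v, eval v (∏ I ∈ 𝓘, P I) ≠ 0 := by
    by_contra! h
    exact prod_ne_zero_iff.mpr hP₀ (MvPolynomial.funext fun v => by simpa using h v)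
  refine ⟨fun i y x => v ⟨i, (y, x)⟩, fun I hI => hP I hI v ?_⟩
  rw [map_prod, prod_ne_zero_iff] at hv
  exact hv I hI

end GapSubrank

open GapSubrank in
/-- partition rank at least two is preserved under some restriction
to any prescribed format with all dimensions at least two. -/
theorem prank_two_preserved (K : Type) [Field K] [IsAlgClosed K]
    (k : ℕ) (hk : 3 ≤ k) (n m : Fin k → ℕ) (hm : ∀ i, 2 ≤ m i)
    (T : (∀ i, Fin (n i)) → K) (hT : 2 ≤ prank T) :
    ∃ A : ∀ i, Fin (m i) → Fin (n i) → K, 2 ≤ prank (applyMaps A T) := by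
  have : Nontrivial (Fin k) := Fin.nontrivial_iff_two_le.mpr (by omega)
  have (i : Fin k) : Nontrivial (Fin (m i)) := Fin.nontrivial_iff_two_le.mpr (hm i)
  let proper := Finset.univ.filter fun I : Finset (Fin k) => I ≠ ∅ ∧ I ≠ Finset.univ
  rw [two_le_prank_iff_forall_two_le_rank_flatten] at hT
  obtain ⟨A, hA⟩ := exists_applyMaps_forall_two_le_rank_flatten proper (κ := fun i => Fin (m i))
    fun I hI => by simp only [proper, Finset.mem_filter] at hI; exact hT I hI.2.1 hI.2.2
  refine ⟨A, two_le_prank_iff_forall_two_le_rank_flatten.mpr fun I h₁ h₂ => hA I ?_⟩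
  simp [proper, h₁, h₂]
end

section
/- Let K be an algebraically closed field, k ≥ 3, and let T be a k-tensor of format (n_1,…,n_k) over K. The following are equivalent: (a) pR(T) ≥ 2; (b) for every p ∈ {1,…,k}, the p-flattening satisfies rk(T_p) ≥ 2 and the image of T_p (a subspace of ⊗_{j ≠ p} K^{n_j}) contains a (k−1)-tensor of partition rank at least two; (c) for some p ∈ {1,…,k}, rk(T_p) ≥ 2 and the image of T_p contains a (k−1)-tensor of partition rank at least two. -/
namespace GapSubrank

/-- The slice of a tensor at leg `p` and index `x`: a tensor of order one less,
on the remaining legs. The span of the slices is the image of the `p`-flattening map. -/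
def sliceTensor {K : Type*} [Field K] {a : Type*} [DecidableEq a] {ι : a → Type*}
    (T : (∀ i, ι i) → K) (p : a) (x : ι p) : (∀ j : {j // j ≠ p}, ι j) → K :=
  fun y => T fun i => if h : i = p then h.symm ▸ x else y ⟨i, h⟩

end GapSubrank
namespace GapAux
open GapSubrank

variable {K : Type*} [Field K]

/-- Pairwise proportionality of two vectors. -/
def Dep {R : Type*} (u v : R → K) : Prop := ∀ s t, u s * v t = u t * v s

lemma dep_symm {R : Type*} {u v : R → K} (h : Dep u v) : Dep v u := by
  intro s t; linear_combination h t s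

lemma dep_zero_left {R : Type*} (v : R → K) : Dep (0 : R → K) v := by
  intro s t; simp

lemma dep_resolve {R : Type*} {u v : R → K} (s0 : R) (h0 : u s0 ≠ 0) (h : Dep u v) :
    ∀ s, v s = (v s0 / u s0) * u s := by
  intro s
  field_simp
  linear_combination - h s s0

/-- rank ≤ 1 factorization predicate for a "matrix" given as a function. -/
def Rk1 {R C : Type*} (M : R → C → K) : Prop :=
  ∃ u : R → K, ∃ w : C → K, ∀ i j, M i j = u i * w j

lemma rk1_of_minors {R C : Type*} (M : R → C → K)
    (h : ∀ i i' j j', M i j * M i' j' = M i j' * M i' j) : Rk1 M := by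
  by_cases hM : ∀ i j, M i j = 0
  · exact ⟨(fun _ => 0), (fun _ => 0), fun i j => by simp [hM]⟩
  · push_neg at hM
    obtain ⟨i0, j0, h0⟩ := hM
    refine ⟨fun i => M i j0, fun j => M i0 j / M i0 j0, fun i j => ?_⟩
    rw [mul_div_assoc', eq_div_iff h0]
    linear_combination h i i0 j j0

lemma minors_of_rk1 {R C : Type*} {M : R → C → K} (h : Rk1 M) :
    ∀ i i' j j', M i j * M i' j' = M i j' * M i' j := by
  obtain ⟨u, w, hf⟩ := h
  intro i i' j j'
  rw [hf, hf, hf, hf]; ring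

section Matrix
open Matrix

variable {R C : Type*} [Fintype R] [Fintype C]

lemma matrix_rank_eq_zero_iff (M : Matrix R C K) : M.rank = 0 ↔ M = 0 := by
  constructor
  · intro h
    rw [Matrix.rank_eq_finrank_span_cols] at h
    have hspan : Submodule.span K (Set.range Mᵀ) = ⊥ := Submodule.finrank_eq_zero.mp h
    ext i j
    have : Mᵀ j ∈ Submodule.span K (Set.range Mᵀ) := Submodule.subset_span ⟨j, rfl⟩
    rw [hspan, Submodule.mem_bot] at this
    have := congrFun this i
    simpa using this
  · rintro rfl; exact Matrix.rank_zero

lemma matrix_rank_le_one_iff (M : Matrix R C K) :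
    M.rank ≤ 1 ↔ Rk1 (fun i j => M i j) := by
  constructor
  · intro h
    rw [Matrix.rank_eq_finrank_span_cols] at h
    obtain ⟨v, hv⟩ := finrank_le_one_iff.mp h
    refine ⟨fun i => (v : R → K) i,
      fun j => Classical.choose (hv ⟨Mᵀ j, Submodule.subset_span ⟨j, rfl⟩⟩), fun i j => ?_⟩
    have hc := Classical.choose_spec (hv ⟨Mᵀ j, Submodule.subset_span ⟨j, rfl⟩⟩)
    have := congrFun (congrArg (Subtype.val) hc) i
    simp only [Submodule.coe_smul, Pi.smul_apply, smul_eq_mul] at this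
    show M i j = _
    rw [show M i j = Mᵀ j i from rfl, ← this]; ring
  · rintro ⟨u, w, hf⟩
    by_cases hM : M = 0
    · simp [hM, Matrix.rank_zero]
    · have hu : u ≠ 0 := by
        rintro rfl
        apply hM
        ext i j
        simpa using hf i j
      rw [Matrix.rank_eq_finrank_span_cols]
      have hle : Submodule.span K (Set.range Mᵀ) ≤ Submodule.span K {u} := by
        rw [Submodule.span_le]
        rintro _ ⟨j, rfl⟩
        rw [SetLike.mem_coe, Submodule.mem_span_singleton]
        exact ⟨w j, by ext i; simp [hf i j]; ring⟩
      calc Module.finrank K (Submodule.span K (Set.range Mᵀ))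
          ≤ Module.finrank K (Submodule.span K {u}) := Submodule.finrank_mono hle
        _ = 1 := finrank_span_singleton hu

end Matrix

end GapAux
set_option linter.unusedSectionVars false

namespace GapAux
open GapSubrank

variable {K : Type*} [Field K]
variable {a : Type*} [Fintype a] [DecidableEq a] {ι : a → Type*} [∀ i, Fintype (ι i)]

/-- Restriction of an index tuple to a subset of the legs. -/
def restrI (I : Finset a) (z : ∀ i, ι i) : ∀ i : {i // i ∈ I}, ι i := fun i => z i

def restrO (I : Finset a) (z : ∀ i, ι i) : ∀ i : {i // i ∉ I}, ι i := fun i => z i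

/-- Glue two partial tuples into a full tuple. -/
def glue (I : Finset a) (r : ∀ i : {i // i ∈ I}, ι i) (q : ∀ i : {i // i ∉ I}, ι i) :
    ∀ i, ι i := fun i => if h : i ∈ I then r ⟨i, h⟩ else q ⟨i, h⟩

/-- Merge two full tuples along a subset. -/
def mrg (I : Finset a) (z z' : ∀ i, ι i) : ∀ i, ι i := fun i => if i ∈ I then z i else z' i

lemma glue_restr (I : Finset a) (z : ∀ i, ι i) : glue I (restrI I z) (restrO I z) = z := by
  funext i; by_cases h : i ∈ I <;> simp [glue, restrI, restrO, h]

lemma restrI_glue (I : Finset a) (r : ∀ i : {i // i ∈ I}, ι i) (q : ∀ i : {i // i ∉ I}, ι i) :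
    restrI I (glue I r q) = r := by
  funext i; simp [glue, restrI, i.2]

lemma restrO_glue (I : Finset a) (r : ∀ i : {i // i ∈ I}, ι i) (q : ∀ i : {i // i ∉ I}, ι i) :
    restrO I (glue I r q) = q := by
  funext i; simp [glue, restrO, i.2]

lemma mrg_glue (I : Finset a) (r r' : ∀ i : {i // i ∈ I}, ι i)
    (q q' : ∀ i : {i // i ∉ I}, ι i) :
    mrg I (glue I r q) (glue I r' q') = glue I r q' := by
  funext i; by_cases h : i ∈ I <;> simp [mrg, glue, h]

/-- Factorization of a tensor along a subset of the legs. -/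
def FactorThru (T : (∀ i, ι i) → K) (I : Finset a) : Prop :=
  ∃ u : (∀ i : {i // i ∈ I}, ι i) → K, ∃ w : (∀ i : {i // i ∉ I}, ι i) → K,
    ∀ z, T z = u (restrI I z) * w (restrO I z)

/-- The 2×2 minors vanishing condition, stated via merged tuples. -/
def MinorsVanish (T : (∀ i, ι i) → K) (I : Finset a) : Prop :=
  ∀ z z', T z * T z' = T (mrg I z z') * T (mrg I z' z)

lemma flatten_apply (T : (∀ i, ι i) → K) (I : Finset a) (r) (q) :
    flatten T I r q = T (glue I r q) := rfl

lemma flatten_eq_zero_iff (T : (∀ i, ι i) → K) (I : Finset a) :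
    flatten T I = 0 ↔ T = 0 := by
  constructor
  · intro h
    funext z
    have := congrFun (congrFun h (restrI I z)) (restrO I z)
    rw [flatten_apply, glue_restr] at this
    simpa using this
  · rintro rfl; rfl

lemma flatten_rank_le_one_iff (T : (∀ i, ι i) → K) (I : Finset a) :
    (flatten T I).rank ≤ 1 ↔ FactorThru T I := by
  rw [matrix_rank_le_one_iff]
  constructor
  · rintro ⟨u, w, hf⟩
    refine ⟨u, w, fun z => ?_⟩
    have := hf (restrI I z) (restrO I z)
    dsimp only at this
    rwa [flatten_apply, glue_restr] at this
  · rintro ⟨u, w, hf⟩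
    refine ⟨u, w, fun r q => ?_⟩
    show flatten T I r q = _
    rw [flatten_apply, hf, restrI_glue, restrO_glue]

lemma flatten_rank_eq_one_iff (T : (∀ i, ι i) → K) (I : Finset a) :
    (flatten T I).rank = 1 ↔ FactorThru T I ∧ T ≠ 0 := by
  constructor
  · intro h
    refine ⟨(flatten_rank_le_one_iff T I).mp h.le, fun h0 => ?_⟩
    rw [← flatten_eq_zero_iff T I, ← matrix_rank_eq_zero_iff] at h0
    omega
  · rintro ⟨hf, h0⟩
    have h1 := (flatten_rank_le_one_iff T I).mpr hf
    have h2 : (flatten T I).rank ≠ 0 := by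
      rw [Ne, matrix_rank_eq_zero_iff, flatten_eq_zero_iff]; exact h0
    omega

lemma hpo_iff (T : (∀ i, ι i) → K) :
    HasPartitionRankOne T ↔
      T ≠ 0 ∧ ∃ I : Finset a, I ≠ ∅ ∧ I ≠ Finset.univ ∧ FactorThru T I := by
  constructor
  · rintro ⟨I, h1, h2, h3⟩
    rw [flatten_rank_eq_one_iff] at h3
    exact ⟨h3.2, I, h1, h2, h3.1⟩
  · rintro ⟨h0, I, h1, h2, h3⟩
    exact ⟨I, h1, h2, (flatten_rank_eq_one_iff T I).mpr ⟨h3, h0⟩⟩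

lemma minors_of_factor {T : (∀ i, ι i) → K} {I : Finset a} (h : FactorThru T I) :
    MinorsVanish T I := by
  obtain ⟨u, w, hf⟩ := h
  intro z z'
  have h1 : restrI I (mrg I z z') = restrI I z := by
    funext i; simp [restrI, mrg, i.2]
  have h2 : restrO I (mrg I z z') = restrO I z' := by
    funext i; simp [restrO, mrg, i.2]
  have h3 : restrI I (mrg I z' z) = restrI I z' := by
    funext i; simp [restrI, mrg, i.2]
  have h4 : restrO I (mrg I z' z) = restrO I z := by
    funext i; simp [restrO, mrg, i.2]
  rw [hf, hf, hf, hf, h1, h2, h3, h4]; ring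

lemma factor_of_minors {T : (∀ i, ι i) → K} {I : Finset a} (h : MinorsVanish T I) :
    FactorThru T I := by
  have key : Rk1 (fun r q => T (glue I r q)) := by
    apply rk1_of_minors
    intro r r' q q'
    have := h (glue I r q) (glue I r' q')
    rwa [mrg_glue, mrg_glue] at this
  obtain ⟨u, w, hf⟩ := key
  refine ⟨u, w, fun z => ?_⟩
  have := hf (restrI I z) (restrO I z)
  dsimp only at this
  rwa [glue_restr] at this

end GapAux
namespace GapAux
open GapSubrank

variable {K : Type*} [Field K]
variable {a : Type*} [Fintype a] [DecidableEq a] {ι : a → Type*} [∀ i, Fintype (ι i)]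
  [∀ i, DecidableEq (ι i)]

/-- The delta tensor at a point. -/
def deltaT (z : ∀ i, ι i) : (∀ i, ι i) → K := fun z' => if z' = z then 1 else 0

lemma hpo_smul_delta {p q : a} (hpq : p ≠ q) {c : K} (hc : c ≠ 0) (z : ∀ i, ι i) :
    HasPartitionRankOne (c • deltaT z : (∀ i, ι i) → K) := by
  rw [hpo_iff]
  constructor
  · intro h0
    have := congrFun h0 z
    simp [deltaT] at this
    exact hc this
  · refine ⟨{p}, Finset.singleton_ne_empty p, ?_, ?_⟩
    · intro h
      apply hpq
      have hq : q ∈ (Finset.univ : Finset a) := Finset.mem_univ q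
      rw [← h] at hq
      exact (Finset.mem_singleton.mp hq).symm
    · refine ⟨fun r => if r = restrI {p} z then c else 0,
        fun s => if s = restrO {p} z then 1 else 0, fun z' => ?_⟩
      by_cases h : z' = z
      · subst h
        simp [deltaT]
      · have : restrI {p} z' ≠ restrI {p} z ∨ restrO {p} z' ≠ restrO {p} z := by
          by_contra hcon
          push_neg at hcon
          apply h
          have := congrArg (fun w => glue {p} w.1 w.2) (Prod.ext hcon.1 hcon.2 :
            (restrI {p} z', restrO {p} z') = (restrI {p} z, restrO {p} z))
          simpa [glue_restr] using this
        rcases this with h1 | h1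
        · simp [deltaT, h, if_neg h1]
        · simp [deltaT, h, if_neg h1]

lemma prank_eq_zero_of_zero : prank (0 : (∀ i, ι i) → K) = 0 := by
  have : 0 ∈ {r : ℕ | ∃ f : Fin r → ((∀ i, ι i) → K),
      (∀ j, HasPartitionRankOne (f j)) ∧ (0 : (∀ i, ι i) → K) = ∑ j, f j} := by
    exact ⟨fun j => j.elim0, fun j => j.elim0, by simp⟩
  simpa [prank] using Nat.sInf_le this

lemma prank_le_one_of_hpo {T : (∀ i, ι i) → K} (h : HasPartitionRankOne T) :
    prank T ≤ 1 := by
  apply Nat.sInf_le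
  exact ⟨fun _ => T, fun _ => h, by simp⟩

lemma exists_decomposition [Infinite K] (h2 : ∃ p q : a, p ≠ q) (T : (∀ i, ι i) → K) :
    ∃ r : ℕ, ∃ f : Fin r → ((∀ i, ι i) → K),
      (∀ j, HasPartitionRankOne (f j)) ∧ T = ∑ j, f j := by
  classical
  obtain ⟨p, q, hpq⟩ := h2
  have hd : ∀ z : ∀ i, ι i, ∃ d : K, d ≠ 0 ∧ d ≠ T z := by
    intro z
    obtain ⟨d, hd⟩ := Infinite.exists_notMem_finset ({0, T z} : Finset K)
    simp only [Finset.mem_insert, Finset.mem_singleton, not_or] at hd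
    exact ⟨d, hd.1, hd.2⟩
  choose d hd0 hdT using hd
  let g : ((∀ i, ι i) × Bool) → ((∀ i, ι i) → K) := fun zb =>
    (if zb.2 then d zb.1 else T zb.1 - d zb.1) • deltaT zb.1
  have hg : ∀ zb, HasPartitionRankOne (g zb) := by
    rintro ⟨z, b⟩
    cases b
    · simpa [g] using hpo_smul_delta hpq (sub_ne_zero.mpr fun h => (hdT z h.symm)) z
    · simpa [g] using hpo_smul_delta hpq (hd0 z) z
  have hsum : ∑ zb : (∀ i, ι i) × Bool, g zb = T := by
    rw [Fintype.sum_prod_type]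
    funext z'
    rw [Finset.sum_apply]
    have hb : ∀ z : ∀ i, ι i, (∑ b : Bool, g (z, b)) z' = T z * deltaT z z' := by
      intro z
      simp only [Fintype.sum_bool, g]
      simp [Pi.add_apply, smul_eq_mul]
      ring
    rw [Finset.sum_congr rfl (fun z _ => hb z)]
    simp only [deltaT, mul_ite, mul_one, mul_zero]
    simp
  let e := (Fintype.equivFin ((∀ i, ι i) × Bool)).symm
  refine ⟨Fintype.card ((∀ i, ι i) × Bool), g ∘ e, fun j => hg (e j), ?_⟩
  rw [← hsum]
  exact (Fintype.sum_equiv e _ _ (fun j => rfl)).symm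

lemma prank_le_one_iff [Infinite K] (h2 : ∃ p q : a, p ≠ q) (T : (∀ i, ι i) → K) :
    prank T ≤ 1 ↔ T = 0 ∨ HasPartitionRankOne T := by
  constructor
  · intro h
    have hne : {r : ℕ | ∃ f : Fin r → ((∀ i, ι i) → K),
        (∀ j, HasPartitionRankOne (f j)) ∧ T = ∑ j, f j}.Nonempty := by
      obtain ⟨r, f, hf, hs⟩ := exists_decomposition h2 T
      exact ⟨r, f, hf, hs⟩
    have hmem := Nat.sInf_mem hne
    rw [show sInf {r : ℕ | ∃ f : Fin r → ((∀ i, ι i) → K),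
        (∀ j, HasPartitionRankOne (f j)) ∧ T = ∑ j, f j} = prank T from rfl] at hmem
    interval_cases h' : prank T
    · obtain ⟨f, _, hs⟩ := hmem
      left; rw [hs]; simp
    · obtain ⟨f, hf, hs⟩ := hmem
      right
      have : T = f 0 := by rw [hs]; simp [Fin.sum_univ_one]
      rw [this]; exact hf 0
  · rintro (rfl | h)
    · rw [prank_eq_zero_of_zero]; omega
    · exact prank_le_one_of_hpo h

lemma two_le_prank_iff [Infinite K] (h2 : ∃ p q : a, p ≠ q) (T : (∀ i, ι i) → K) :
    2 ≤ prank T ↔ T ≠ 0 ∧ ¬ HasPartitionRankOne T := by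
  rw [show (2 ≤ prank T) ↔ ¬ (prank T ≤ 1) by omega, prank_le_one_iff h2 T]
  tauto

end GapAux
namespace GapAux
open GapSubrank

variable {K : Type*} [Field K]

/-- Covering lemma: if every point satisfies one of finitely many polynomial systems,
then one system is satisfied by all points (over an infinite field). -/
lemma poly_cover {σ J β : Type*} [Fintype J] [Infinite K]
    (P : J → β → MvPolynomial σ K)
    (h : ∀ c : σ → K, ∃ I : J, ∀ t : β, MvPolynomial.eval c (P I t) = 0) :
    ∃ I : J, ∀ (c : σ → K) (t : β), MvPolynomial.eval c (P I t) = 0 := by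
  by_contra hcon
  push_neg at hcon
  choose cf tf hne using hcon
  have hQ : (∏ I : J, P I (tf I)) ≠ 0 := by
    rw [Finset.prod_ne_zero_iff]
    intro I _
    intro h0
    exact hne I (by rw [h0]; simp)
  have hev : ∃ c, MvPolynomial.eval c (∏ I : J, P I (tf I)) ≠ 0 := by
    by_contra h0
    push_neg at h0
    exact hQ (MvPolynomial.funext fun x => by rw [h0 x]; simp)
  obtain ⟨c, hc⟩ := hev
  obtain ⟨I, hI⟩ := h c
  apply hc
  rw [map_prod]
  exact Finset.prod_eq_zero (Finset.mem_univ I) (hI (tf I))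

lemma exists_ne_zero_pt {Y : Type*} {v : Y → K} (h : v ≠ 0) : ∃ s, v s ≠ 0 := by
  by_contra h0; push_neg at h0; exact h (funext h0)

/-- A family of rank-one matrices, all of whose pairwise sums have rank at most one,
has a common left factor or a common right factor. -/
lemma rk1_family {X R C : Type*} (N : X → R → C → K)
    (h1 : ∀ x, Rk1 (N x))
    (h2 : ∀ x y, Rk1 (fun i j => N x i j + N y i j)) :
    (∃ u : R → K, ∀ x, ∃ w : C → K, ∀ i j, N x i j = u i * w j) ∨
    (∃ w : C → K, ∀ x, ∃ u : R → K, ∀ i j, N x i j = u i * w j) := by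
  classical
  -- normalized factorizations
  have hfac : ∀ x, ∃ A : R → K, ∃ B : C → K,
      (∀ i j, N x i j = A i * B j) ∧ ((∀ i j, N x i j = 0) → A = 0) ∧
      ((¬ ∀ i j, N x i j = 0) → A ≠ 0 ∧ B ≠ 0) := by
    intro x
    by_cases hz : ∀ i j, N x i j = 0
    · exact ⟨0, 0, fun i j => by simp [hz], fun _ => rfl, fun h => absurd hz h⟩
    · obtain ⟨A, B, hAB⟩ := h1 x
      push_neg at hz
      obtain ⟨i0, j0, h0⟩ := hz
      refine ⟨A, B, hAB, fun h => absurd h (by push_neg; exact ⟨i0, j0, h0⟩), fun _ => ?_⟩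
      rw [hAB] at h0
      constructor
      · intro h; rw [h] at h0; simp at h0
      · intro h; rw [h] at h0; simp at h0
  choose A B hAB hzero hnz using hfac
  -- pairwise dependence
  have Hdep : ∀ x y, Dep (A x) (A y) ∨ Dep (B x) (B y) := by
    intro x y
    have hm := minors_of_rk1 (h2 x y)
    have key : ∀ (i i' : R) (j j' : C),
        (A x i * A y i' - A x i' * A y i) * (B x j * B y j' - B x j' * B y j) = 0 := by
      intro i i' j j'
      have := hm i i' j j'
      simp only [hAB] at this
      linear_combination this
    by_cases hd : Dep (A x) (A y)
    · exact Or.inl hd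
    · right
      simp only [Dep, not_forall] at hd
      obtain ⟨s, t, hst⟩ := hd
      intro j j'
      have := key s t j j'
      have hne : A x s * A y t - A x t * A y s ≠ 0 := sub_ne_zero.mpr hst
      have h5 := (mul_eq_zero.mp this).resolve_left hne
      linear_combination h5
  by_cases hL : ∀ x y, Dep (A x) (A y)
  · by_cases hz : ∀ x, A x = 0
    · left
      refine ⟨0, fun x => ⟨0, fun i j => ?_⟩⟩
      rw [hAB x i j, hz x]; simp
    · push_neg at hz
      obtain ⟨x0, hx0⟩ := hz
      obtain ⟨s0, hs0⟩ := exists_ne_zero_pt hx0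
      left
      refine ⟨A x0, fun x => ?_⟩
      have hres := dep_resolve s0 hs0 (hL x0 x)
      exact ⟨fun j => (A x s0 / A x0 s0) * B x j, fun i j => by
        rw [hAB x i j, hres i]; ring⟩
  · push_neg at hL
    obtain ⟨x1, x2, hx12⟩ := hL
    have hb12 : Dep (B x1) (B x2) := (Hdep x1 x2).resolve_left hx12
    have hA1 : A x1 ≠ 0 := by
      rintro h; exact hx12 (h ▸ dep_zero_left _)
    have hA2 : A x2 ≠ 0 := by
      rintro h; exact hx12 (dep_symm (h ▸ dep_zero_left _))
    have hN1 : ¬ ∀ i j, N x1 i j = 0 := fun h => hA1 (hzero x1 h)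
    have hB1 : B x1 ≠ 0 := (hnz x1 hN1).2
    obtain ⟨t1, ht1⟩ := exists_ne_zero_pt hB1
    right
    refine ⟨B x1, fun x => ?_⟩
    by_cases hbx : Dep (B x1) (B x)
    · have hres := dep_resolve t1 ht1 hbx
      exact ⟨fun i => (B x t1 / B x1 t1) * A x i, fun i j => by
        rw [hAB x i j, hres j]; ring⟩
    · have ha1x : Dep (A x1) (A x) := (Hdep x1 x).resolve_right hbx
      by_cases hbx2 : Dep (B x2) (B x)
      · have hN2 : ¬ ∀ i j, N x2 i j = 0 := fun h => hA2 (hzero x2 h)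
        have hB2 : B x2 ≠ 0 := (hnz x2 hN2).2
        obtain ⟨t2, ht2⟩ := exists_ne_zero_pt hB2
        have hres2 := dep_resolve t2 ht2 hbx2
        have hres1 := dep_resolve t1 ht1 hb12
        exact ⟨fun i => (B x t2 / B x2 t2) * (B x2 t1 / B x1 t1) * A x i, fun i j => by
          rw [hAB x i j, hres2 j, hres1 j]; ring⟩
      · have ha2x : Dep (A x2) (A x) := (Hdep x2 x).resolve_right hbx2
        by_cases hax : A x = 0
        · exact ⟨0, fun i j => by rw [hAB x i j, hax]; simp⟩
        · exfalso
          obtain ⟨s, hs⟩ := exists_ne_zero_pt hax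
          have hr1 := dep_resolve s hs (dep_symm ha1x)
          have hr2 := dep_resolve s hs (dep_symm ha2x)
          apply hx12
          intro s' t'
          rw [hr1 s', hr1 t', hr2 s', hr2 t']; ring

end GapAux
namespace GapAux
open GapSubrank

set_option linter.unusedSectionVars false

variable {K : Type*} [Field K]
variable {a : Type*} [Fintype a] [DecidableEq a] {ι : a → Type*} [∀ i, Fintype (ι i)]
  [∀ i, DecidableEq (ι i)]

lemma slice_full (T : (∀ i, ι i) → K) (p : a) (z : ∀ i, ι i) :
    sliceTensor T p (z p) (fun j : {j : a // j ≠ p} => z j.1) = T z := by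
  show T _ = T z
  congr 1
  funext i
  by_cases h : i = p
  · subst h; simp
  · simp [h]

/-- Linear combination of the slices of `T` at leg `p`. -/
def Scomb (T : (∀ i, ι i) → K) (p : a) (c : ι p → K) :
    (∀ j : {j : a // j ≠ p}, ι j.1) → K :=
  fun y => ∑ x : ι p, c x * sliceTensor T p x y

lemma Scomb_mem_span (T : (∀ i, ι i) → K) (p : a) (c : ι p → K) :
    Scomb T p c ∈ Submodule.span K (Set.range (sliceTensor T p)) := by
  have he : Scomb T p c = ∑ x : ι p, c x • sliceTensor T p x := by
    funext y
    rw [Finset.sum_apply]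
    rfl
  rw [he]
  exact Submodule.sum_mem _ fun x _ =>
    Submodule.smul_mem _ _ (Submodule.subset_span ⟨x, rfl⟩)

lemma Scomb_single (T : (∀ i, ι i) → K) (p : a) (x : ι p) :
    Scomb T p (fun x' => if x' = x then 1 else 0) = sliceTensor T p x := by
  funext y
  simp only [Scomb, ite_mul, one_mul, zero_mul]
  rw [Finset.sum_ite_eq' Finset.univ x (fun x' => sliceTensor T p x' y)]
  simp

lemma Scomb_pair (T : (∀ i, ι i) → K) (p : a) (x y : ι p) :
    Scomb T p (fun x' => (if x' = x then 1 else 0) + (if x' = y then 1 else 0)) =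
      fun v => sliceTensor T p x v + sliceTensor T p y v := by
  funext v
  simp only [Scomb, add_mul]
  rw [Finset.sum_add_distrib]
  have h1 := congrFun (Scomb_single T p x) v
  have h2 := congrFun (Scomb_single T p y) v
  simp only [Scomb] at h1 h2
  rw [h1, h2]

lemma rk1_glue_of_factor {T : (∀ i, ι i) → K} {I : Finset a} (h : FactorThru T I) :
    Rk1 (fun r q => T (glue I r q)) := by
  obtain ⟨u, w, hf⟩ := h
  refine ⟨u, w, fun r q => ?_⟩
  show T (glue I r q) = _
  rw [hf, restrI_glue, restrO_glue]

end GapAux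
namespace GapAux
open GapSubrank

set_option linter.unusedSectionVars false
set_option maxHeartbeats 1000000

variable {K : Type*} [Field K]
variable {a : Type*} [Fintype a] [DecidableEq a] {ι : a → Type*} [∀ i, Fintype (ι i)]
  [∀ i, DecidableEq (ι i)]

/-- The hard step: if every element of the span of the slices of `T` at leg `p` has
partition rank at most one, then `T` has partition rank at most one. -/
lemma prank_le_one_of_slices [Infinite K] (p : a)
    (hb2 : ∃ j1 j2 : {j : a // j ≠ p}, j1 ≠ j2)
    (T : (∀ i, ι i) → K)
    (h : ∀ S ∈ Submodule.span K (Set.range (sliceTensor T p)), prank S ≤ 1) :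
    prank T ≤ 1 := by
  classical
  set b := {j : a // j ≠ p}
  obtain ⟨j1, j2, hj12⟩ := hb2
  -- every combination of slices has vanishing minors for some nonempty proper subset
  have hminors : ∀ c : ι p → K, ∃ I : {I : Finset b // I ≠ ∅ ∧ I ≠ Finset.univ},
      MinorsVanish (Scomb T p c) I.1 := by
    intro c
    have hle := h _ (Scomb_mem_span T p c)
    rw [prank_le_one_iff ⟨j1, j2, hj12⟩] at hle
    rcases hle with h0 | hpo
    · refine ⟨⟨{j1}, Finset.singleton_ne_empty j1, ?_⟩, ?_⟩
      · intro hu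
        apply hj12
        have : j2 ∈ ({j1} : Finset b) := hu ▸ Finset.mem_univ j2
        exact (Finset.mem_singleton.mp this).symm
      · intro z z'
        rw [h0]; simp
    · rw [hpo_iff] at hpo
      obtain ⟨_, I, h1, h2, h3⟩ := hpo
      exact ⟨⟨I, h1, h2⟩, minors_of_factor h3⟩
  -- transfer to polynomials and use the covering lemma
  let Sp : (∀ j : b, ι j.1) → MvPolynomial (ι p) K := fun y =>
    ∑ x : ι p, MvPolynomial.X x * MvPolynomial.C (sliceTensor T p x y)
  have heval : ∀ (c : ι p → K) y, MvPolynomial.eval c (Sp y) = Scomb T p c y := by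
    intro c y
    simp [Sp, Scomb]
  let P : {I : Finset b // I ≠ ∅ ∧ I ≠ Finset.univ} →
      ((∀ j : b, ι j.1) × (∀ j : b, ι j.1)) → MvPolynomial (ι p) K := fun I zz =>
    Sp zz.1 * Sp zz.2 - Sp (mrg I.1 zz.1 zz.2) * Sp (mrg I.1 zz.2 zz.1)
  have hcover := poly_cover P (fun c => by
    obtain ⟨I, hI⟩ := hminors c
    refine ⟨I, fun t => ?_⟩
    simp only [P, map_sub, map_mul, heval]
    rw [sub_eq_zero]
    exact hI t.1 t.2)
  obtain ⟨I, hIall⟩ := hcover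
  have hfact : ∀ c : ι p → K, FactorThru (Scomb T p c) I.1 := by
    intro c
    apply factor_of_minors
    intro z z'
    have := hIall c (z, z')
    simp only [P, map_sub, map_mul, heval] at this
    rw [sub_eq_zero] at this
    exact this
  -- the matrices of the slices w.r.t. the fixed subset I
  let Nm : ι p → _ → _ → K := fun x r q => sliceTensor T p x (glue I.1 r q)
  have h1 : ∀ x, Rk1 (Nm x) := by
    intro x
    have := hfact (fun x' => if x' = x then 1 else 0)
    rw [Scomb_single] at this
    exact rk1_glue_of_factor this
  have h2 : ∀ x y, Rk1 (fun r q => Nm x r q + Nm y r q) := by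
    intro x y
    have := hfact (fun x' => (if x' = x then 1 else 0) + (if x' = y then 1 else 0))
    rw [Scomb_pair] at this
    have hr := rk1_glue_of_factor this
    obtain ⟨u, w, hf⟩ := hr
    exact ⟨u, w, fun r q => hf r q⟩
  -- common factor
  have key := rk1_family Nm h1 h2
  -- push the subset I into the full index set
  let emb : b ↪ a := ⟨Subtype.val, Subtype.val_injective⟩
  have hTz : ∀ (z : ∀ i, ι i),
      T z = Nm (z p) (restrI I.1 (fun j : b => z j.1)) (restrO I.1 (fun j : b => z j.1)) := by
    intro z
    show T z = sliceTensor T p (z p) (glue I.1 _ _)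
    rw [glue_restr, slice_full]
  rcases key with ⟨u, hu⟩ | ⟨w, hw⟩
  · -- common row factor: T factors through the image of I
    choose w hwspec using hu
    set It : Finset a := I.1.map emb with hIt
    have hpmem : p ∉ It := by
      rw [hIt, Finset.mem_map]
      rintro ⟨j, _, hj⟩
      exact j.2 hj
    have hjin : ∀ j : b, j ∈ I.1 → j.1 ∈ It := by
      intro j hj; rw [hIt, Finset.mem_map]; exact ⟨j, hj, rfl⟩
    have hjout : ∀ j : b, j ∉ I.1 → j.1 ∉ It := by
      intro j hj hmem
      rw [hIt, Finset.mem_map] at hmem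
      obtain ⟨j', hj', hj'e⟩ := hmem
      exact hj (by rwa [show j = j' from Subtype.ext hj'e.symm])
    have hfacT : FactorThru T It := by
      refine ⟨fun r => u (fun j : {j : b // j ∈ I.1} => r ⟨j.1.1, hjin j.1 j.2⟩),
        fun q => w (q ⟨p, hpmem⟩) (fun j : {j : b // j ∉ I.1} => q ⟨j.1.1, hjout j.1 j.2⟩),
        fun z => ?_⟩
      rw [hTz z, hwspec (z p)]
      rfl
    by_cases hT : T = 0
    · rw [hT, prank_eq_zero_of_zero]; omega
    · refine prank_le_one_of_hpo ((hpo_iff T).mpr ⟨hT, It, ?_, ?_, hfacT⟩)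
      · obtain ⟨j, hj⟩ := Finset.nonempty_iff_ne_empty.mpr I.2.1
        exact Finset.nonempty_iff_ne_empty.mp ⟨j.1, hjin j hj⟩
      · intro hu2
        exact hpmem (hu2 ▸ Finset.mem_univ p)
  · -- common column factor
    choose u huspec using hw
    set It : Finset a := I.1ᶜ.map emb with hIt
    have hpmem : p ∉ It := by
      rw [hIt, Finset.mem_map]
      rintro ⟨j, _, hj⟩
      exact j.2 hj
    have hjin : ∀ j : b, j ∉ I.1 → j.1 ∈ It := by
      intro j hj; rw [hIt, Finset.mem_map]; exact ⟨j, Finset.mem_compl.mpr hj, rfl⟩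
    have hjout : ∀ j : b, j ∈ I.1 → j.1 ∉ It := by
      intro j hj hmem
      rw [hIt, Finset.mem_map] at hmem
      obtain ⟨j', hj', hj'e⟩ := hmem
      rw [Finset.mem_compl] at hj'
      exact hj' (by rwa [show j' = j from Subtype.ext hj'e])
    have hfacT : FactorThru T It := by
      refine ⟨fun r => w (fun j : {j : b // j ∉ I.1} => r ⟨j.1.1, hjin j.1 j.2⟩),
        fun q => u (q ⟨p, hpmem⟩) (fun j : {j : b // j ∈ I.1} => q ⟨j.1.1, hjout j.1 j.2⟩),
        fun z => ?_⟩
      rw [hTz z, huspec (z p)]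
      show u (z p) _ * w _ = w _ * u (z p) _
      rw [mul_comm]
      rfl
    by_cases hT : T = 0
    · rw [hT, prank_eq_zero_of_zero]; omega
    · refine prank_le_one_of_hpo ((hpo_iff T).mpr ⟨hT, It, ?_, ?_, hfacT⟩)
      · have : ∃ j : b, j ∉ I.1 := by
          by_contra h0
          push_neg at h0
          exact I.2.2 (Finset.eq_univ_iff_forall.mpr h0)
        obtain ⟨j, hj⟩ := this
        exact Finset.nonempty_iff_ne_empty.mp ⟨j.1, hjin j hj⟩
      · intro hu2
        exact hpmem (hu2 ▸ Finset.mem_univ p)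

end GapAux
namespace GapAux
open GapSubrank

set_option linter.unusedSectionVars false
set_option maxHeartbeats 1000000

variable {K : Type*} [Field K]
variable {a : Type*} [Fintype a] [DecidableEq a] {ι : a → Type*} [∀ i, Fintype (ι i)]
  [∀ i, DecidableEq (ι i)]

lemma sliceTensor_apply (T : (∀ i, ι i) → K) (p : a) (x : ι p)
    (y : ∀ j : {j : a // j ≠ p}, ι j.1) :
    sliceTensor T p x y = T (fun i => if h : i = p then h.symm ▸ x else y ⟨i, h⟩) := rfl

/-- Slices span factorization, case `p ∈ I`: every element of the span of the slices
factors through `I` restricted, with a fixed right factor. -/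
lemma span_factor_of_mem {T : (∀ i, ι i) → K} {I : Finset a} {p : a}
    (hpI : p ∈ I) (hIp : I ≠ {p}) (hIu : I ≠ Finset.univ)
    (hfac : FactorThru T I) :
    ∀ S ∈ Submodule.span K (Set.range (sliceTensor T p)), prank S ≤ 1 := by
  classical
  obtain ⟨u, w, hf⟩ := hfac
  set I' : Finset {j : a // j ≠ p} := Finset.subtype (fun j => j ≠ p) I with hI'
  have hmemI' : ∀ j : {j : a // j ≠ p}, j ∈ I' ↔ j.1 ∈ I := by
    intro j; rw [hI', Finset.mem_subtype]
  let W : (∀ j : {j : {j : a // j ≠ p} // j ∉ I'}, ι j.1.1) → K := fun q =>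
    w (fun i : {i : a // i ∉ I} => q ⟨⟨i.1, fun hip => i.2 (hip ▸ hpI)⟩,
      fun hm => i.2 ((hmemI' _).mp hm)⟩)
  -- the factorization predicate
  let Q : ((∀ j : {j : a // j ≠ p}, ι j.1) → K) → Prop := fun S =>
    ∃ U : (∀ j : {j : {j : a // j ≠ p} // j ∈ I'}, ι j.1.1) → K,
      ∀ y, S y = U (restrI I' y) * W (restrO I' y)
  have hQ : ∀ S ∈ Submodule.span K (Set.range (sliceTensor T p)), Q S := by
    intro S hS
    refine Submodule.span_induction ?_ ?_ ?_ ?_ hS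
    · rintro _ ⟨x, rfl⟩
      refine ⟨fun r => u (fun i : {i : a // i ∈ I} =>
        if h : i.1 = p then (h.symm ▸ x : ι i.1)
        else r ⟨⟨i.1, h⟩, (hmemI' _).mpr i.2⟩), fun y => ?_⟩
      rw [sliceTensor_apply, hf]
      have harg : restrO I (fun i => if h : i = p then h.symm ▸ x else y ⟨i, h⟩) =
          (fun i : {i : a // i ∉ I} => restrO I' y
            ⟨⟨i.1, fun hip => i.2 (hip ▸ hpI)⟩, fun hm => i.2 ((hmemI' _).mp hm)⟩) := by
        funext i
        show (if h : i.1 = p then (h.symm ▸ x : ι i.1) else y ⟨i.1, h⟩) = _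
        rw [dif_neg (fun hip : i.1 = p => i.2 (hip ▸ hpI))]
        rfl
      rw [harg]
      rfl
    · exact ⟨0, fun y => by simp⟩
    · rintro S1 S2 _ _ ⟨U1, hU1⟩ ⟨U2, hU2⟩
      exact ⟨U1 + U2, fun y => by simp [hU1 y, hU2 y]; ring⟩
    · rintro c S1 _ ⟨U1, hU1⟩
      exact ⟨c • U1, fun y => by simp [hU1 y]; ring⟩
  intro S hS
  obtain ⟨U, hU⟩ := hQ S hS
  by_cases hS0 : S = 0
  · rw [hS0, prank_eq_zero_of_zero]; omega
  · refine prank_le_one_of_hpo ((hpo_iff S).mpr ⟨hS0, I', ?_, ?_, ⟨U, W, hU⟩⟩)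
    · have : ∃ q ∈ I, q ≠ p := by
        by_contra h0
        push_neg at h0
        apply hIp
        apply Finset.eq_singleton_iff_unique_mem.mpr
        exact ⟨hpI, h0⟩
      obtain ⟨q, hq, hqp⟩ := this
      exact Finset.nonempty_iff_ne_empty.mp ⟨⟨q, hqp⟩, (hmemI' _).mpr hq⟩
    · have : ∃ q, q ∉ I := by
        by_contra h0
        push_neg at h0
        exact hIu (Finset.eq_univ_iff_forall.mpr h0)
      obtain ⟨q, hq⟩ := this
      intro hu2
      have : (⟨q, fun hqp => hq (hqp ▸ hpI)⟩ : {j : a // j ≠ p}) ∈ I' :=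
        hu2 ▸ Finset.mem_univ _
      exact hq ((hmemI' _).mp this)

/-- Slices span factorization, case `p ∉ I`. -/
lemma span_factor_of_notMem {T : (∀ i, ι i) → K} {I : Finset a} {p : a}
    (hpI : p ∉ I) (hIne : I ≠ ∅) {q0 : a} (hq0p : q0 ≠ p) (hq0 : q0 ∉ I)
    (hfac : FactorThru T I) :
    ∀ S ∈ Submodule.span K (Set.range (sliceTensor T p)), prank S ≤ 1 := by
  classical
  obtain ⟨u, w, hf⟩ := hfac
  set I' : Finset {j : a // j ≠ p} := Finset.subtype (fun j => j ≠ p) I with hI'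
  have hmemI' : ∀ j : {j : a // j ≠ p}, j ∈ I' ↔ j.1 ∈ I := by
    intro j; rw [hI', Finset.mem_subtype]
  let U : (∀ j : {j : {j : a // j ≠ p} // j ∈ I'}, ι j.1.1) → K := fun r =>
    u (fun i : {i : a // i ∈ I} => r ⟨⟨i.1, fun hip => hpI (hip ▸ i.2)⟩,
      (hmemI' _).mpr i.2⟩)
  let Q : ((∀ j : {j : a // j ≠ p}, ι j.1) → K) → Prop := fun S =>
    ∃ V : (∀ j : {j : {j : a // j ≠ p} // j ∉ I'}, ι j.1.1) → K,
      ∀ y, S y = U (restrI I' y) * V (restrO I' y)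
  have hQ : ∀ S ∈ Submodule.span K (Set.range (sliceTensor T p)), Q S := by
    intro S hS
    refine Submodule.span_induction ?_ ?_ ?_ ?_ hS
    · rintro _ ⟨x, rfl⟩
      refine ⟨fun q => w (fun i : {i : a // i ∉ I} =>
        if h : i.1 = p then (h.symm ▸ x : ι i.1)
        else q ⟨⟨i.1, h⟩, fun hm => i.2 ((hmemI' _).mp hm)⟩), fun y => ?_⟩
      rw [sliceTensor_apply, hf]
      have harg : restrI I (fun i => if h : i = p then h.symm ▸ x else y ⟨i, h⟩) =
          (fun i : {i : a // i ∈ I} => restrI I' y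
            ⟨⟨i.1, fun hip => hpI (hip ▸ i.2)⟩, (hmemI' _).mpr i.2⟩) := by
        funext i
        show (if h : i.1 = p then (h.symm ▸ x : ι i.1) else y ⟨i.1, h⟩) = _
        rw [dif_neg (fun hip : i.1 = p => hpI (hip ▸ i.2))]
        rfl
      rw [harg]
      rfl
    · exact ⟨0, fun y => by simp⟩
    · rintro S1 S2 _ _ ⟨V1, hV1⟩ ⟨V2, hV2⟩
      exact ⟨V1 + V2, fun y => by simp [hV1 y, hV2 y]; ring⟩
    · rintro c S1 _ ⟨V1, hV1⟩
      exact ⟨c • V1, fun y => by simp [hV1 y]; ring⟩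
  intro S hS
  obtain ⟨V, hV⟩ := hQ S hS
  by_cases hS0 : S = 0
  · rw [hS0, prank_eq_zero_of_zero]; omega
  · refine prank_le_one_of_hpo ((hpo_iff S).mpr ⟨hS0, I', ?_, ?_, ⟨U, V, hV⟩⟩)
    · have : ∃ q ∈ I, True := by
        obtain ⟨q, hq⟩ := Finset.nonempty_iff_ne_empty.mpr hIne
        exact ⟨q, hq, trivial⟩
      obtain ⟨q, hq, -⟩ := this
      exact Finset.nonempty_iff_ne_empty.mp
        ⟨⟨q, fun hqp => hpI (hqp ▸ hq)⟩, (hmemI' _).mpr hq⟩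
    · intro hu2
      have : (⟨q0, hq0p⟩ : {j : a // j ≠ p}) ∈ I' := hu2 ▸ Finset.mem_univ _
      exact hq0 ((hmemI' _).mp this)

/-- If `T` factors through the complement of `{p}`, it factors through `{p}`. -/
lemma factorThru_singleton_of_compl {T : (∀ i, ι i) → K} {I : Finset a} {p : a}
    (hpI : p ∉ I) (hcompl : ∀ i, i ≠ p → i ∈ I) (hfac : FactorThru T I) :
    FactorThru T ({p} : Finset a) := by
  obtain ⟨u, w, hf⟩ := hfac
  refine ⟨fun r => w (fun i : {i : a // i ∉ I} => r ⟨i.1, Finset.mem_singleton.mpr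
      (by by_contra hne; exact i.2 (hcompl i.1 hne))⟩),
    fun q => u (fun i : {i : a // i ∈ I} => q ⟨i.1, fun hm =>
      hpI ((Finset.mem_singleton.mp hm) ▸ i.2)⟩), fun z => ?_⟩
  rw [hf z, mul_comm]
  rfl

end GapAux
namespace GapAux
open GapSubrank

set_option linter.unusedSectionVars false
set_option maxHeartbeats 1000000

variable {K : Type*} [Field K]
variable {a : Type*} [Fintype a] [DecidableEq a] {ι : a → Type*} [∀ i, Fintype (ι i)]
  [∀ i, DecidableEq (ι i)]

lemma not_conj [Infinite K] (h2 : ∃ p q : a, p ≠ q) (T : (∀ i, ι i) → K)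
    (h : prank T ≤ 1) (p : a) :
    ¬(2 ≤ (flatten T {p}).rank ∧
      ∃ S ∈ Submodule.span K (Set.range (sliceTensor T p)), 2 ≤ prank S) := by
  rw [prank_le_one_iff h2 T] at h
  rintro ⟨hrk, S, hS, hpr⟩
  rcases h with rfl | hpo
  · have h0 : flatten (0 : (∀ i, ι i) → K) ({p} : Finset a) = 0 :=
      (flatten_eq_zero_iff _ _).mpr rfl
    rw [h0, Matrix.rank_zero] at hrk
    omega
  · rw [hpo_iff] at hpo
    obtain ⟨hT0, I, hne, hnu, hfac⟩ := hpo
    by_cases hpI : p ∈ I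
    · by_cases hIp : I = {p}
      · subst hIp
        have := (flatten_rank_le_one_iff T {p}).mpr hfac
        omega
      · have := span_factor_of_mem hpI hIp hnu hfac S hS
        omega
    · by_cases hcompl : ∀ i, i ≠ p → i ∈ I
      · have := (flatten_rank_le_one_iff T {p}).mpr
          (factorThru_singleton_of_compl hpI hcompl hfac)
        omega
      · push_neg at hcompl
        obtain ⟨q0, hq0p, hq0⟩ := hcompl
        have := span_factor_of_notMem hpI hne hq0p hq0 hfac S hS
        omega

end GapAux

open GapSubrank in
/-- recursive characterization of partition rank at least two. -/
theorem prank_two_characterization (K : Type) [Field K] [IsAlgClosed K]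
    (k : ℕ) (hk : 3 ≤ k) (n : Fin k → ℕ) (T : (∀ i, Fin (n i)) → K) :
    letI A : Prop := 2 ≤ prank T
    letI B : Prop := ∀ p : Fin k, 2 ≤ (flatten T {p}).rank ∧
      ∃ S ∈ Submodule.span K (Set.range (sliceTensor T p)), 2 ≤ prank S
    letI C : Prop := ∃ p : Fin k, 2 ≤ (flatten T {p}).rank ∧
      ∃ S ∈ Submodule.span K (Set.range (sliceTensor T p)), 2 ≤ prank S
    (A ↔ B) ∧ (B ↔ C) := by
  have h2a : ∃ p q : Fin k, p ≠ q :=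
    ⟨⟨0, by omega⟩, ⟨1, by omega⟩, by simp [Fin.ext_iff]⟩
  have hb2 : ∀ p : Fin k, ∃ j1 j2 : {j : Fin k // j ≠ p}, j1 ≠ j2 := by
    intro p
    have h1 : Fintype.card {j : Fin k // ¬ j = p} =
        Fintype.card (Fin k) - Fintype.card {j : Fin k // j = p} :=
      Fintype.card_subtype_compl _
    rw [Fintype.card_subtype_eq, Fintype.card_fin] at h1
    have hcard : 1 < Fintype.card {j : Fin k // ¬ j = p} := by omega
    exact Fintype.one_lt_card_iff.mp hcard
  have hAimp : 2 ≤ prank T → (∀ p : Fin k, 2 ≤ (flatten T {p}).rank ∧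
      ∃ S ∈ Submodule.span K (Set.range (sliceTensor T p)), 2 ≤ prank S) := by
    intro hA p
    have hpuniv : ({p} : Finset (Fin k)) ≠ Finset.univ := by
      intro h
      have := congrArg Finset.card h
      rw [Finset.card_singleton, Finset.card_univ, Fintype.card_fin] at this
      omega
    constructor
    · by_contra hr
      push_neg at hr
      have hle : (flatten T {p}).rank ≤ 1 := by omega
      have hfac := (GapAux.flatten_rank_le_one_iff T {p}).mp hle
      have hT : prank T ≤ 1 := by
        by_cases hT0 : T = 0
        · rw [hT0, GapAux.prank_eq_zero_of_zero]; omega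
        · exact GapAux.prank_le_one_of_hpo ((GapAux.hpo_iff T).mpr
            ⟨hT0, {p}, Finset.singleton_ne_empty p, hpuniv, hfac⟩)
      have : (2 : ℕ) ≤ prank T := hA
      omega
    · by_contra hs
      push_neg at hs
      have hall : ∀ S ∈ Submodule.span K (Set.range (sliceTensor T p)),
          prank S ≤ 1 := fun S hS => by have := hs S hS; omega
      have := GapAux.prank_le_one_of_slices p (hb2 p) T hall
      have : (2 : ℕ) ≤ prank T := hA
      omega
  have hCimp : (∃ p : Fin k, 2 ≤ (flatten T {p}).rank ∧
      ∃ S ∈ Submodule.span K (Set.range (sliceTensor T p)), 2 ≤ prank S) → 2 ≤ prank T := by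
    rintro ⟨p, hp⟩
    by_contra hA
    push_neg at hA
    exact GapAux.not_conj h2a T (by omega) p hp
  have hBC : (∀ p : Fin k, 2 ≤ (flatten T {p}).rank ∧
      ∃ S ∈ Submodule.span K (Set.range (sliceTensor T p)), 2 ≤ prank S) → (∃ p : Fin k, 2 ≤ (flatten T {p}).rank ∧
      ∃ S ∈ Submodule.span K (Set.range (sliceTensor T p)), 2 ≤ prank S) := fun hB => ⟨⟨0, by omega⟩, hB ⟨0, by omega⟩⟩
  exact ⟨⟨hAimp, fun hB => hCimp (hBC hB)⟩, ⟨hBC, fun hC => hAimp (hCimp hC)⟩⟩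
end

section
/- Let K be an algebraically closed field and k ≥ 2. Let W_k ∈ (K^2)^{⊗k} be the W-tensor and let P ∈ (K^2)^{⊗k} be any tensor that is linearly independent from W_k. Let H = {(g_1,…,g_k) ∈ GL_2(K)^k : (g_1 ⊗ ⋯ ⊗ g_k)W_k = W_k} be the stabilizer subgroup of W_k. Then the tensor e_1 ⊗ ⋯ ⊗ e_1 lies in the Zariski closure in (K^2)^{⊗k} of the set {c · (g_1 ⊗ ⋯ ⊗ g_k)P : c ∈ K \ {0}, (g_1,…,g_k) ∈ H}. -/
namespace WDeg

open Finset Function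

variable {K : Type*} [Field K] {k : ℕ}

lemma fin2 (b : Fin 2) : b = 0 ∨ b = 1 := by
  fin_cases b
  · exact Or.inl rfl
  · exact Or.inr rfl

/-- basis-like tuple: 1 at j, 0 elsewhere -/
def ee (k : ℕ) (j : Fin k) : Fin k → Fin 2 := fun i => if i = j then 1 else 0

lemma ee_self (j : Fin k) : ee k j j = 1 := by simp [ee]

lemma ee_ne {i j : Fin k} (h : i ≠ j) : ee k j i = 0 := by simp [ee, h]

lemma ee_inj : Function.Injective (ee k) := by
  intro i j h
  by_contra hne
  have h1 := congrFun h i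
  rw [ee_self, ee_ne hne] at h1
  exact one_ne_zero h1

lemma wTensor_apply (x : Fin k → Fin 2) :
    GapSubrank.wTensor K (fun _ : Fin k => 2) x = if ∃ j, x = ee k j then 1 else 0 := by
  unfold GapSubrank.wTensor
  by_cases hx : ∃ j, x = ee k j
  · rw [if_pos hx]
    obtain ⟨j, rfl⟩ := hx
    refine if_pos ⟨j, by rw [ee_self]; rfl, fun i hij => by rw [ee_ne hij]; rfl⟩
  · rw [if_neg hx]
    refine if_neg ?_
    rintro ⟨j, h1, h0⟩
    refine hx ⟨j, funext fun i => ?_⟩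
    by_cases hij : i = j
    · subst hij
      rw [ee_self]
      rcases fin2 (x i) with h | h
      · rw [h] at h1; simp at h1
      · exact h
    · rw [ee_ne hij]
      rcases fin2 (x i) with h | h
      · exact h
      · exfalso; have := h0 i hij; rw [h] at this; simp at this

lemma sum_mul_w (f : (Fin k → Fin 2) → K) :
    ∑ x : Fin k → Fin 2, f x * GapSubrank.wTensor K (fun _ : Fin k => 2) x
      = ∑ j : Fin k, f (ee k j) := by
  simp_rw [wTensor_apply, mul_ite, mul_one, mul_zero]
  calc ∑ x : Fin k → Fin 2, (if ∃ j, x = ee k j then f x else 0)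
      = ∑ x ∈ Finset.univ.image (ee k), (if ∃ j, x = ee k j then f x else 0) := by
        refine (Finset.sum_subset (Finset.subset_univ _) ?_).symm
        intro x _ hx
        refine if_neg fun ⟨j, hj⟩ => hx ?_
        simp only [Finset.mem_image]
        exact ⟨j, Finset.mem_univ j, hj.symm⟩
    _ = ∑ j : Fin k, (if ∃ j', ee k j = ee k j' then f (ee k j) else 0) :=
        Finset.sum_image (fun i _ j _ h => ee_inj h)
    _ = ∑ j : Fin k, f (ee k j) :=
        Finset.sum_congr rfl fun j _ => if_pos ⟨j, rfl⟩

/-- the multilinear evaluation of coefficient family P at point y -/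
def Qfun (P : (Fin k → Fin 2) → K) (y : Fin k → K) : K :=
  ∑ x : Fin k → Fin 2, P x * ∏ i, (if x i = 0 then 1 else y i)

lemma multilinear_zero [Infinite K] (c : (Fin k → Fin 2) → K)
    (h : ∀ y : Fin k → K, Qfun c y = 0) : ∀ x, c x = 0 := by
  classical
  set mexp : (Fin k → Fin 2) → (Fin k →₀ ℕ) :=
    fun x => Finsupp.equivFunOnFinite.symm (fun i => ((x i : ℕ))) with hmexp
  have hmexp_apply : ∀ x i, mexp x i = (x i : ℕ) := fun x i => rfl
  have hinj : Function.Injective mexp := by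
    intro x x' hxx
    funext i
    have h2 := Finsupp.equivFunOnFinite.symm.injective hxx
    exact Fin.ext (congrFun h2 i)
  set q : MvPolynomial (Fin k) K := ∑ x : Fin k → Fin 2, MvPolynomial.monomial (mexp x) (c x)
    with hq
  have heval : ∀ y : Fin k → K, MvPolynomial.eval y q = 0 := by
    intro y
    rw [hq, map_sum]
    have : ∀ x : Fin k → Fin 2,
        MvPolynomial.eval y (MvPolynomial.monomial (mexp x) (c x))
          = c x * ∏ i, (if x i = 0 then 1 else y i) := by
      intro x
      rw [MvPolynomial.eval_monomial, Finsupp.prod_pow]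
      congr 1
      refine Finset.prod_congr rfl fun i _ => ?_
      rw [hmexp_apply]
      rcases fin2 (x i) with hx | hx <;> rw [hx] <;> simp
    rw [Finset.sum_congr rfl fun x _ => this x]
    exact h y
  have hq0 : q = 0 := MvPolynomial.funext (fun y => by rw [heval y, map_zero])
  intro x
  have : MvPolynomial.coeff (mexp x) q = c x := by
    rw [hq, MvPolynomial.coeff_sum]
    rw [Finset.sum_eq_single x]
    · rw [MvPolynomial.coeff_monomial, if_pos rfl]
    · intro x' _ hx'
      rw [MvPolynomial.coeff_monomial, if_neg (fun hc => hx' (hinj hc))]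
    · intro hx; exact absurd (Finset.mem_univ x) hx
  rw [hq0, MvPolynomial.coeff_zero] at this
  exact this.symm

def Afun (P : (Fin k → Fin 2) → K) (j : Fin k) (y : Fin k → K) : K :=
  ∑ x : Fin k → Fin 2, if x j = 0 then
    P x * ∏ i ∈ Finset.univ.erase j, (if x i = 0 then 1 else y i) else 0

def Dfun (P : (Fin k → Fin 2) → K) (j : Fin k) (y : Fin k → K) : K :=
  ∑ x : Fin k → Fin 2, if x j = 1 then
    P x * ∏ i ∈ Finset.univ.erase j, (if x i = 0 then 1 else y i) else 0

lemma Afun_update (P : (Fin k → Fin 2) → K) (j : Fin k) (y : Fin k → K) (t : K) :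
    Afun P j (Function.update y j t) = Afun P j y := by
  unfold Afun
  refine Finset.sum_congr rfl fun x _ => ?_
  congr 1
  congr 1
  refine Finset.prod_congr rfl fun i hi => ?_
  rw [Function.update_of_ne (Finset.ne_of_mem_erase hi)]

lemma Dfun_update (P : (Fin k → Fin 2) → K) (j : Fin k) (y : Fin k → K) (t : K) :
    Dfun P j (Function.update y j t) = Dfun P j y := by
  unfold Dfun
  refine Finset.sum_congr rfl fun x _ => ?_
  congr 1
  congr 1
  refine Finset.prod_congr rfl fun i hi => ?_
  rw [Function.update_of_ne (Finset.ne_of_mem_erase hi)]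

lemma Q_decomp (P : (Fin k → Fin 2) → K) (j : Fin k) (y : Fin k → K) :
    Qfun P y = Afun P j y + y j * Dfun P j y := by
  unfold Qfun Afun Dfun
  rw [Finset.mul_sum, ← Finset.sum_add_distrib]
  refine Finset.sum_congr rfl fun x _ => ?_
  rw [← Finset.mul_prod_erase Finset.univ _ (Finset.mem_univ j)]
  rcases fin2 (x j) with h | h <;> rw [h] <;> simp <;> ring

lemma quad_eq [Infinite K] (aa bb c s₀ : K)
    (h : ∀ t : K, (s₀ + t) * (aa + t * bb) = (s₀ + t) * c) : bb = 0 ∧ aa = c := by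
  have hp : (Polynomial.C s₀ + Polynomial.X) *
      (Polynomial.C aa + Polynomial.X * Polynomial.C bb - Polynomial.C c) = 0 := by
    refine Polynomial.funext fun t => ?_
    simp only [Polynomial.eval_mul, Polynomial.eval_add, Polynomial.eval_sub,
      Polynomial.eval_C, Polynomial.eval_X, Polynomial.eval_zero]
    linear_combination h t
  have h1 : (Polynomial.C s₀ + Polynomial.X : Polynomial K) ≠ 0 := by
    intro hc
    have := congrArg (Polynomial.coeff · 1) hc
    simp at this
  have h2 : (Polynomial.C aa + Polynomial.X * Polynomial.C bb - Polynomial.C c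
      : Polynomial K) = 0 := by
    rcases mul_eq_zero.mp hp with h' | h'
    · exact absurd h' h1
    · exact h'
  constructor
  · have := congrArg (Polynomial.coeff · 1) h2
    simpa using this
  · have := congrArg (Polynomial.coeff · 0) h2
    simp at this
    linear_combination this

lemma Dfun_affine (P : (Fin k → Fin 2) → K) (j l : Fin k) (hjl : l ≠ j) (y : Fin k → K) :
    ∃ aa bb : K, ∀ t : K, Dfun P j (Function.update y l t) = aa + t * bb := by
  classical
  have hlmem : l ∈ Finset.univ.erase j := Finset.mem_erase.mpr ⟨hjl, Finset.mem_univ l⟩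
  refine ⟨∑ x : Fin k → Fin 2, if x j = 1 ∧ x l = 0 then
      P x * ∏ i ∈ (Finset.univ.erase j).erase l, (if x i = 0 then 1 else y i) else 0,
    ∑ x : Fin k → Fin 2, if x j = 1 ∧ x l = 1 then
      P x * ∏ i ∈ (Finset.univ.erase j).erase l, (if x i = 0 then 1 else y i) else 0,
    fun t => ?_⟩
  unfold Dfun
  rw [Finset.mul_sum, ← Finset.sum_add_distrib]
  refine Finset.sum_congr rfl fun x _ => ?_
  have hprod : ∏ i ∈ Finset.univ.erase j, (if x i = 0 then 1 else Function.update y l t i)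
      = (if x l = 0 then 1 else t) *
        ∏ i ∈ (Finset.univ.erase j).erase l, (if x i = 0 then 1 else y i) := by
    rw [← Finset.mul_prod_erase _ _ hlmem]
    congr 1
    · rw [Function.update_self]
    · refine Finset.prod_congr rfl fun i hi => ?_
      rw [Function.update_of_ne (Finset.ne_of_mem_erase hi)]
  rw [hprod]
  rcases fin2 (x j) with h | h <;> rcases fin2 (x l) with h' | h' <;>
    simp [h, h'] <;> ring

lemma Q_eq_sum_mul_D (P : (Fin k → Fin 2) → K)
    (hQ : ∀ y : Fin k → K, ∑ i, y i = 0 → Qfun P y = 0)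
    (y : Fin k → K) (j : Fin k) :
    Qfun P y = (∑ i, y i) * Dfun P j y := by
  classical
  set s := ∑ i, y i with hs
  set h := Function.update y j (y j - s) with hh
  have hsum : ∑ i, h i = 0 := by
    rw [hh, Finset.sum_update_of_mem (Finset.mem_univ j), ← Finset.erase_eq,
      Finset.sum_erase_eq_sub (Finset.mem_univ j), ← hs]
    ring
  have hQh : Qfun P h = 0 := hQ h hsum
  have e1 : Qfun P y = Afun P j y + y j * Dfun P j y := Q_decomp P j y
  have e2 : Qfun P h = Afun P j y + (y j - s) * Dfun P j y := by
    rw [Q_decomp P j h, hh, Afun_update, Dfun_update, Function.update_self]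
  rw [hQh] at e2
  linear_combination e1 - e2

lemma Dfun_const (P : (Fin k → Fin 2) → K) [Infinite K] (hk : 2 ≤ k)
    (hQ : ∀ y : Fin k → K, ∑ i, y i = 0 → Qfun P y = 0)
    (j : Fin k) (y : Fin k → K) : Dfun P j y = Dfun P j (fun _ => 0) := by
  classical
  have hupd : ∀ (y : Fin k → K) (l : Fin k) (t : K),
      Dfun P j (Function.update y l t) = Dfun P j y := by
    intro y l t
    rcases eq_or_ne l j with rfl | hlj
    · rw [Dfun_update]
    · obtain ⟨aa, bb, hab⟩ := Dfun_affine P j l hlj y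
      have hs : ∀ t' : K, ∑ i, Function.update y l t' i
          = (∑ i ∈ Finset.univ.erase l, y i) + t' := by
        intro t'
        rw [Finset.sum_update_of_mem (Finset.mem_univ l), ← Finset.erase_eq]
        ring
      have hc : ∀ t' : K, ((∑ i ∈ Finset.univ.erase l, y i) + t') * (aa + t' * bb)
          = ((∑ i ∈ Finset.univ.erase l, y i) + t') * Dfun P l y := by
        intro t'
        rw [← hab t', ← hs t']
        rw [← Q_eq_sum_mul_D P hQ _ j, Q_eq_sum_mul_D P hQ _ l, Dfun_update]
      obtain ⟨hbb, _⟩ := quad_eq aa bb (Dfun P l y) _ hc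
      rw [hab t, hbb]
      have : Dfun P j y = Dfun P j (Function.update y l (y l)) := by
        rw [Function.update_eq_self]
      rw [this, hab (y l), hbb]
      ring
  -- now zero out coordinates one by one
  have main : ∀ st : Finset (Fin k),
      Dfun P j (fun i => if i ∈ st then 0 else y i) = Dfun P j y := by
    intro st
    induction st using Finset.induction_on with
    | empty => simp
    | @insert a st ha ih =>
      have : (fun i => if i ∈ insert a st then (0:K) else y i)
          = Function.update (fun i => if i ∈ st then 0 else y i) a 0 := by
        funext i
        rcases eq_or_ne i a with rfl | hia
        · simp [Function.update_self, ha]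
        · simp [Function.update_of_ne hia, Finset.mem_insert, hia]
      rw [this, hupd, ih]
  have := main Finset.univ
  simp only [Finset.mem_univ, if_true] at this
  exact this.symm

lemma Dfun_zero (P : (Fin k → Fin 2) → K) (j : Fin k) :
    Dfun P j (fun _ => 0) = P (ee k j) := by
  classical
  unfold Dfun
  rw [Finset.sum_eq_single (ee k j)]
  · rw [if_pos (ee_self j)]
    have hp1 : ∏ i ∈ Finset.univ.erase j,
        (if ee k j i = 0 then (1:K) else (fun _ : Fin k => (0:K)) i) = 1 :=
      Finset.prod_eq_one fun i hi => if_pos (ee_ne (Finset.mem_erase.mp hi).1)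
    rw [hp1, mul_one]
  · intro x _ hx
    by_cases h1 : x j = 1
    · rw [if_pos h1]
      by_cases h2 : ∀ i ∈ Finset.univ.erase j, x i = 0
      · exfalso
        refine hx (funext fun i => ?_)
        rcases eq_or_ne i j with rfl | hij
        · rw [ee_self, h1]
        · rw [ee_ne hij, h2 i (Finset.mem_erase.mpr ⟨hij, Finset.mem_univ i⟩)]
      · push_neg at h2
        obtain ⟨i₀, hi₀, hxi₀⟩ := h2
        have hz : (if x i₀ = 0 then (1:K) else (fun _ : Fin k => (0:K)) i₀) = 0 :=
          if_neg hxi₀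
        rw [Finset.prod_eq_zero hi₀ hz, mul_zero]
    · rw [if_neg h1]
  · intro hx
    exact absurd (Finset.mem_univ _) hx

lemma key [Infinite K] (hk : 2 ≤ k) (P : (Fin k → Fin 2) → K)
    (hQ : ∀ y : Fin k → K, ∑ i, y i = 0 → Qfun P y = 0) :
    ∃ c : K, ∀ x, P x = c * GapSubrank.wTensor K (fun _ : Fin k => 2) x := by
  classical
  have hk0 : 0 < k := by omega
  set j₀ : Fin k := ⟨0, hk0⟩
  set c : K := P (ee k j₀) with hc
  have hQall : ∀ y : Fin k → K, Qfun P y = (∑ i, y i) * c := by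
    intro y
    rw [Q_eq_sum_mul_D P hQ y j₀, Dfun_const P hk hQ j₀ y, Dfun_zero]
  -- W evaluation
  have hQW : ∀ y : Fin k → K,
      Qfun (fun x => GapSubrank.wTensor K (fun _ : Fin k => 2) x) y = ∑ i, y i := by
    intro y
    unfold Qfun
    rw [show (∑ x : Fin k → Fin 2, GapSubrank.wTensor K (fun _ : Fin k => 2) x *
        ∏ i, (if x i = 0 then 1 else y i))
      = ∑ x : Fin k → Fin 2, (∏ i, (if x i = 0 then 1 else y i)) *
        GapSubrank.wTensor K (fun _ : Fin k => 2) x from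
      Finset.sum_congr rfl fun x _ => mul_comm _ _]
    rw [sum_mul_w]
    refine Finset.sum_congr rfl fun j _ => ?_
    rw [Finset.prod_eq_single j]
    · rw [ee_self]; simp
    · intro i _ hij
      rw [if_pos (ee_ne hij)]
    · intro hj; exact absurd (Finset.mem_univ j) hj
  have hzero : ∀ x, (fun x => P x - c * GapSubrank.wTensor K (fun _ : Fin k => 2) x) x = 0 := by
    refine multilinear_zero _ fun y => ?_
    unfold Qfun
    simp_rw [sub_mul, mul_assoc]
    rw [Finset.sum_sub_distrib]
    have h2 : ∑ x : Fin k → Fin 2, c * (GapSubrank.wTensor K (fun _ : Fin k => 2) x *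
        ∏ i, (if x i = 0 then 1 else y i)) = c * (∑ i, y i) := by
      rw [← Finset.mul_sum]
      congr 1
      rw [← hQW y]
      unfold Qfun
      exact Finset.sum_congr rfl fun x _ => rfl
    rw [h2]
    have h1 : ∑ x : Fin k → Fin 2, P x * ∏ i, (if x i = 0 then 1 else y i)
        = (∑ i, y i) * c := hQall y
    rw [h1]
    ring
  exact ⟨c, fun x => by have := hzero x; simp at this; linear_combination this⟩

lemma apply_comp (A B : Fin k → Fin 2 → Fin 2 → K) (T : (Fin k → Fin 2) → K) :
    GapSubrank.applyMaps A (GapSubrank.applyMaps B T)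
      = GapSubrank.applyMaps (fun i r c => ∑ m : Fin 2, A i r m * B i m c) T := by
  classical
  funext y
  unfold GapSubrank.applyMaps
  simp_rw [Finset.mul_sum]
  rw [Finset.sum_comm]
  refine Finset.sum_congr rfl fun z _ => ?_
  have h1 : ∀ x : Fin k → Fin 2,
      (∏ i, A i (y i) (x i)) * ((∏ i, B i (x i) (z i)) * T z)
        = (∏ i, A i (y i) (x i) * B i (x i) (z i)) * T z := by
    intro x
    rw [Finset.prod_mul_distrib]
    ring
  rw [Finset.sum_congr rfl fun x _ => h1 x, ← Finset.sum_mul]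
  congr 1
  rw [Finset.prod_univ_sum]
  rw [Fintype.piFinset_univ]

lemma apply_diag (w : Fin k → Fin 2 → K) (T : (Fin k → Fin 2) → K) :
    GapSubrank.applyMaps (fun i r c => if r = c then w i r else 0) T
      = fun x => (∏ i, w i (x i)) * T x := by
  classical
  funext x
  unfold GapSubrank.applyMaps
  rw [Finset.sum_eq_single x]
  · congr 1
    refine Finset.prod_congr rfl fun i _ => if_pos rfl
  · intro z _ hz
    obtain ⟨i₀, hi₀⟩ := Function.ne_iff.mp hz
    refine mul_eq_zero_of_left (Finset.prod_eq_zero (Finset.mem_univ i₀) ?_) _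
    exact if_neg fun hc => hi₀ hc.symm
  · intro hx; exact absurd (Finset.mem_univ x) hx

/-- unipotent upper-triangular matrices -/
def umat (y : Fin k → K) : Fin k → Fin 2 → Fin 2 → K :=
  fun i r c => if r = 0 then (if c = 0 then 1 else y i) else (if c = 0 then 0 else 1)

/-- diagonal torus matrices -/
def dmat (k : ℕ) (t : K) : Fin k → Fin 2 → Fin 2 → K :=
  fun _ r c => if r = c then (if r = 0 then t⁻¹ else t ^ (k - 1)) else 0

def gmat (k : ℕ) (t : K) (y : Fin k → K) : Fin k → Fin 2 → Fin 2 → K :=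
  fun i r c => ∑ m : Fin 2, dmat k t i r m * umat y i m c

lemma umat_stab (y : Fin k → K) (hy : ∑ i, y i = 0) :
    GapSubrank.applyMaps (umat y) (GapSubrank.wTensor K (fun _ : Fin k => 2))
      = GapSubrank.wTensor K (fun _ : Fin k => 2) := by
  classical
  funext x
  unfold GapSubrank.applyMaps
  rw [sum_mul_w (fun s => ∏ i, umat y i (x i) (s i))]
  by_cases hx : ∃ j, x = ee k j
  · obtain ⟨j₀, rfl⟩ := hx
    rw [wTensor_apply, if_pos ⟨j₀, rfl⟩]
    rw [Finset.sum_eq_single j₀]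
    · refine Finset.prod_eq_one fun i _ => ?_
      rcases eq_or_ne i j₀ with rfl | hij
      · rw [ee_self]; simp [umat]
      · rw [ee_ne hij]; simp [umat]
    · intro j _ hj
      refine Finset.prod_eq_zero (Finset.mem_univ j₀) ?_
      rw [ee_self, ee_ne (fun h : j₀ = j => hj h.symm)]
      simp [umat]
    · intro hj; exact absurd (Finset.mem_univ j₀) hj
  · rw [wTensor_apply, if_neg hx]
    by_cases hx0 : ∀ i, x i = 0
    · have : ∀ j : Fin k, ∏ i, umat y i (x i) (ee k j i) = y j := by
        intro j
        rw [← Finset.mul_prod_erase Finset.univ _ (Finset.mem_univ j)]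
        rw [hx0 j, ee_self]
        have : ∏ i ∈ Finset.univ.erase j, umat y i (x i) (ee k j i) = 1 := by
          refine Finset.prod_eq_one fun i hi => ?_
          rw [hx0 i, ee_ne (Finset.mem_erase.mp hi).1]
          simp [umat]
        rw [this, mul_one]
        simp [umat]
      rw [Finset.sum_congr rfl fun j _ => this j]
      exact hy
    · push_neg at hx0
      obtain ⟨i₁, hi₁⟩ := hx0
      have hxi₁ : x i₁ = 1 := (fin2 (x i₁)).resolve_left hi₁
      have hex : ∃ i₂, i₂ ≠ i₁ ∧ x i₂ = 1 := by
        by_contra hc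
        push_neg at hc
        refine hx ⟨i₁, funext fun i => ?_⟩
        rcases eq_or_ne i i₁ with rfl | hii
        · rw [hxi₁, ee_self]
        · rw [ee_ne hii]
          rcases fin2 (x i) with h | h
          · exact h
          · exact absurd h (hc i hii)
      obtain ⟨i₂, hi₂ne, hxi₂⟩ := hex
      refine Finset.sum_eq_zero fun j _ => ?_
      rcases eq_or_ne j i₁ with rfl | hji
      · refine Finset.prod_eq_zero (Finset.mem_univ i₂) ?_
        rw [hxi₂, ee_ne hi₂ne]
        simp [umat]
      · refine Finset.prod_eq_zero (Finset.mem_univ i₁) ?_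
        rw [hxi₁, ee_ne fun h : i₁ = j => hji h.symm]
        simp [umat]

lemma dmat_stab (t : K) (ht : t ≠ 0) :
    GapSubrank.applyMaps (dmat k t) (GapSubrank.wTensor K (fun _ : Fin k => 2))
      = GapSubrank.wTensor K (fun _ : Fin k => 2) := by
  classical
  have := apply_diag (fun i r => if r = (0 : Fin 2) then t⁻¹ else t ^ (k - 1))
    (GapSubrank.wTensor K (fun _ : Fin k => 2))
  rw [show GapSubrank.applyMaps (dmat k t)
      (GapSubrank.wTensor K (fun _ : Fin k => 2))
    = GapSubrank.applyMaps
        (fun (i : Fin k) (r c : Fin 2) =>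
          if r = c then (if r = (0:Fin 2) then t⁻¹ else t ^ (k-1)) else 0)
        (GapSubrank.wTensor K (fun _ : Fin k => 2)) from rfl, this]
  funext x
  by_cases hx : ∃ j, x = ee k j
  · obtain ⟨j, rfl⟩ := hx
    have hprod : ∏ i, (if ee k j i = (0:Fin 2) then t⁻¹ else t ^ (k-1))
        = t ^ (k-1) * (t⁻¹) ^ (k-1) := by
      rw [← Finset.mul_prod_erase Finset.univ _ (Finset.mem_univ j)]
      rw [ee_self]
      have h1 : ∏ i ∈ Finset.univ.erase j, (if ee k j i = (0:Fin 2) then t⁻¹ else t ^ (k-1))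
          = (t⁻¹) ^ (k-1) := by
        rw [Finset.prod_congr rfl fun i hi => if_pos (ee_ne (Finset.mem_erase.mp hi).1)]
        rw [Finset.prod_const, Finset.card_erase_of_mem (Finset.mem_univ j)]
        rw [Finset.card_univ, Fintype.card_fin]
      rw [h1]
      norm_num
    rw [hprod, inv_pow, mul_inv_cancel₀ (pow_ne_zero _ ht), one_mul]
  · rw [wTensor_apply, if_neg hx, mul_zero]

lemma applyMaps_umat_zero (y : Fin k → K) (P : (Fin k → Fin 2) → K) :
    GapSubrank.applyMaps (umat y) P (fun _ => 0) = Qfun P y := by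
  unfold GapSubrank.applyMaps Qfun
  refine Finset.sum_congr rfl fun x _ => ?_
  rw [mul_comm (P x) _]
  congr 1


lemma gmat_eq (t : K) (y : Fin k → K) :
    gmat k t y = fun i r c => ∑ m : Fin 2, dmat k t i r m * umat y i m c := rfl

lemma gmat_unit (t : K) (ht : t ≠ 0) (y : Fin k → K) (i : Fin k) :
    IsUnit (Matrix.of (gmat k t y i)) := by
  rw [Matrix.isUnit_iff_isUnit_det, Matrix.det_fin_two]
  have h00 : Matrix.of (gmat k t y i) 0 0 = t⁻¹ := by
    simp [gmat, dmat, umat, Fin.sum_univ_two]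
  have h11 : Matrix.of (gmat k t y i) 1 1 = t ^ (k - 1) := by
    simp [gmat, dmat, umat, Fin.sum_univ_two]
  have h10 : Matrix.of (gmat k t y i) 1 0 = 0 := by
    simp [gmat, dmat, umat, Fin.sum_univ_two]
  rw [h00, h11, h10, mul_zero, sub_zero, isUnit_iff_ne_zero]
  exact mul_ne_zero (inv_ne_zero ht) (pow_ne_zero _ ht)

end WDeg

open GapSubrank in
/-- degeneration to `e₁ ⊗ ⋯ ⊗ e₁` using the stabilizer of the W-tensor,
together with scalar multiples. -/
theorem degeneration_with_stabilizer (K : Type) [Field K] [IsAlgClosed K]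
    (k : ℕ) (hk : 2 ≤ k)
    (P : ((i : Fin k) → Fin 2) → K)
    (hP : LinearIndependent K ![wTensor K (fun _ : Fin k => 2), P]) :
    InZariskiClosure
      {S : ((i : Fin k) → Fin 2) → K |
        ∃ (c : K) (g : ∀ _ : Fin k, Matrix (Fin 2) (Fin 2) K), c ≠ 0 ∧
          (∀ i, IsUnit (g i)) ∧
          applyMaps (fun i y x => g i y x) (wTensor K (fun _ : Fin k => 2)) =
            wTensor K (fun _ : Fin k => 2) ∧
          S = c • applyMaps (fun i y x => g i y x) P}
      (fun x => if ∀ i, (x i : ℕ) = 0 then 1 else 0) := by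
  classical
  intro p hp
  have hWP : ¬ ∃ c : K, ∀ x, P x = c * wTensor K (fun _ : Fin k => 2) x := by
    rintro ⟨c, hc⟩
    rw [linearIndependent_fin2] at hP
    obtain ⟨hP0, hPW⟩ := hP
    simp only [Matrix.cons_val_one, Matrix.head_cons, Matrix.cons_val_zero] at hP0 hPW
    rcases eq_or_ne c 0 with rfl | hc0
    · exact hP0 (funext fun x => by simp [hc x])
    · refine hPW c⁻¹ (funext fun x => ?_)
      simp only [Pi.smul_apply, smul_eq_mul]
      rw [hc x, ← mul_assoc, inv_mul_cancel₀ hc0, one_mul]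
  obtain ⟨y, hy0, hQy⟩ : ∃ y : Fin k → K, (∑ i, y i) = 0 ∧ WDeg.Qfun P y ≠ 0 := by
    by_contra hcon
    push_neg at hcon
    exact hWP (WDeg.key hk P hcon)
  set W := wTensor K (fun _ : Fin k => 2) with hW
  set P' := applyMaps (WDeg.umat y) P with hP'
  set Qy := WDeg.Qfun P y with hQydef
  have hP'0 : P' (fun _ => 0) = Qy := WDeg.applyMaps_umat_zero y P
  set m : (Fin k → Fin 2) → ℕ := fun x => (Finset.univ.filter fun i => x i = 1).card with hm
  have hmle : ∀ x, m x ≤ k := by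
    intro x
    rw [hm]
    calc (Finset.univ.filter fun i => x i = 1).card ≤ Finset.univ.card :=
          Finset.card_filter_le _ _
      _ = k := by rw [Finset.card_univ, Fintype.card_fin]
  set φ : K → ((Fin k → Fin 2) → K) := fun t x => (P' x / Qy) * t ^ (k * m x) with hφ
  set F : Polynomial K := MvPolynomial.eval₂ Polynomial.C
      (fun x => Polynomial.C (P' x / Qy) * Polynomial.X ^ (k * m x)) p with hF
  have hcomp : ∀ t : K, Polynomial.eval t F = MvPolynomial.eval (φ t) p := by
    intro t
    have h1 := MvPolynomial.eval₂_comp_left (Polynomial.evalRingHom t) Polynomial.C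
      (fun x => Polynomial.C (P' x / Qy) * Polynomial.X ^ (k * m x)) p
    have h2 : (Polynomial.evalRingHom t).comp Polynomial.C = RingHom.id K := by
      ext a; simp
    rw [h2] at h1
    have h3 : ((Polynomial.evalRingHom t) ∘ fun x =>
        Polynomial.C (P' x / Qy) * Polynomial.X ^ (k * m x)) = φ t := by
      funext x
      simp [hφ]
    rw [h3, MvPolynomial.eval₂_id] at h1
    exact h1
  have heval0 : ∀ t : K, t ≠ 0 → MvPolynomial.eval (φ t) p = 0 := by
    intro t ht
    refine hp (φ t) ?_
    refine ⟨t ^ k / Qy, fun i => Matrix.of (WDeg.gmat k t y i),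
      div_ne_zero (pow_ne_zero _ ht) hQy, fun i => WDeg.gmat_unit t ht y i, ?_, ?_⟩
    · show applyMaps (WDeg.gmat k t y) W = W
      rw [WDeg.gmat_eq t y, ← WDeg.apply_comp, hW, WDeg.umat_stab y hy0, WDeg.dmat_stab t ht]
    · show φ t = (t ^ k / Qy) • applyMaps (WDeg.gmat k t y) P
      have hgP : applyMaps (WDeg.gmat k t y) P
          = fun x => (∏ i, (if x i = (0 : Fin 2) then t⁻¹ else t ^ (k - 1))) * P' x := by
        rw [WDeg.gmat_eq t y, ← WDeg.apply_comp, ← hP']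
        exact WDeg.apply_diag (fun i r => if r = (0 : Fin 2) then t⁻¹ else t ^ (k - 1)) P'
      rw [hgP]
      funext x
      show φ t x = (t ^ k / Qy) * ((∏ i, (if x i = (0:Fin 2) then t⁻¹ else t ^ (k-1))) * P' x)
      have hprod : ∏ i, (if x i = (0:Fin 2) then t⁻¹ else t ^ (k-1))
          = (t ^ (k-1)) ^ (m x) * (t⁻¹) ^ (k - m x) := by
        have hfac : ∀ i : Fin k, (if x i = (0:Fin 2) then t⁻¹ else t ^ (k-1))
            = (if x i = (1:Fin 2) then t ^ (k-1) else t⁻¹) := by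
          intro i
          rcases WDeg.fin2 (x i) with h | h <;> rw [h] <;> simp
        rw [Finset.prod_congr rfl fun i _ => hfac i]
        rw [Finset.prod_ite (fun _ => t ^ (k-1)) (fun _ => t⁻¹), Finset.prod_const,
          Finset.prod_const]
        congr 1
        have := Finset.card_filter_add_card_filter_not
          (s := Finset.univ) (p := fun i : Fin k => x i = 1)
        rw [Finset.card_univ, Fintype.card_fin] at this
        have hmx : m x = (Finset.univ.filter fun i : Fin k => x i = 1).card := rfl
        congr 1
        omega
      rw [hprod]
      have harith : t ^ k * ((t ^ (k-1)) ^ (m x) * (t⁻¹) ^ (k - m x)) = t ^ (k * m x) := by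
        rw [inv_pow, ← pow_mul, ← mul_assoc, ← pow_add]
        have he : k + (k-1) * m x = k * m x + (k - m x) := by
          have h1 : (k-1) * m x = k * m x - m x := by rw [Nat.sub_mul, one_mul]
          have h2 : m x ≤ k * m x := Nat.le_mul_of_pos_left _ (by omega)
          have h3 := hmle x
          omega
        rw [he, pow_add]
        exact mul_inv_cancel_right₀ (pow_ne_zero _ ht) _
      have : (t ^ k / Qy) * (((t ^ (k-1)) ^ (m x) * (t⁻¹) ^ (k - m x)) * P' x)
          = (t ^ k * ((t ^ (k-1)) ^ (m x) * (t⁻¹) ^ (k - m x))) * P' x / Qy := by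
        ring
      rw [this, harith, hφ]
      ring
  have hFe : ∀ t : K, t ≠ 0 → F.eval t = 0 := fun t ht => by rw [hcomp t]; exact heval0 t ht
  have hF0 : F = 0 := by
    refine Polynomial.eq_zero_of_infinite_isRoot F ?_
    refine Set.Infinite.mono ?_ ((Set.finite_singleton (0:K)).infinite_compl)
    intro t ht
    exact hFe t ht
  have hev0 : MvPolynomial.eval (φ 0) p = 0 := by
    rw [← hcomp 0, hF0, Polynomial.eval_zero]
  have hφ0 : φ 0 = (fun x : Fin k → Fin 2 => if ∀ i, ((x i : ℕ)) = 0 then (1:K) else 0) := by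
    funext x
    by_cases hx : ∀ i, x i = 0
    · have hxe : x = fun _ => 0 := funext hx
      have hm0 : m x = 0 := by
        rw [hm, Finset.card_eq_zero, Finset.filter_eq_empty_iff]
        intro i _
        rw [hx i]
        simp
      rw [hφ]
      show (P' x / Qy) * (0:K) ^ (k * m x) = _
      rw [hm0, Nat.mul_zero, pow_zero, mul_one, hxe, hP'0, div_self hQy]
      simp
    · push_neg at hx
      obtain ⟨i₁, hi₁⟩ := hx
      have hxi₁ : x i₁ = 1 := (WDeg.fin2 (x i₁)).resolve_left hi₁
      have hmpos : m x ≠ 0 := by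
        rw [hm, ← Nat.pos_iff_ne_zero, Finset.card_pos]
        exact ⟨i₁, Finset.mem_filter.mpr ⟨Finset.mem_univ i₁, hxi₁⟩⟩
      rw [hφ]
      show (P' x / Qy) * (0:K) ^ (k * m x) = _
      rw [zero_pow (by positivity), mul_zero]
      rw [if_neg ?_]
      intro hc
      have := hc i₁
      rw [hxi₁] at this
      simp at this
  rw [← hφ0]
  exact hev0
end
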